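/- arXiv:1801.06930 — 9 statements merged into one kernel-verified Lean document; each statement's English description precedes it below -/
import Mathlib

section
/- Let f:[a,b]→ℝ be continuous with max f = -min f = M > 0, and suppose there exist a ≤ t₀ < t₁ < ⋯ < t_k ≤ b and ε ∈ {-1,1} with ε(-1)^i f(t_i) = M for all i. Then for any polynomial p of degree at most k-1, ‖f - p‖_∞ ≥ ‖f‖_∞ = M. -/
/-- if f alternates k+1 times at level M, then no polynomial of
degree at most k-1 approximates f better than M in the sup norm. -/
theorem alternance_lower_bound
    (a b M : ℝ) (hab : a < b) (f : ℝ → ℝ)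
    (hf : ContinuousOn f (Set.Icc a b))
    (hM : 0 < M)
    (hub : ∀ t ∈ Set.Icc a b, f t ≤ M)
    (hlb : ∀ t ∈ Set.Icc a b, -M ≤ f t)
    (k : ℕ) (hk : 1 ≤ k) (ε : ℝ) (hε : ε = 1 ∨ ε = -1)
    (t : ℕ → ℝ)
    (ht0 : a ≤ t 0) (htk : t k ≤ b)
    (htmono : ∀ i, i < k → t i < t (i + 1))
    (halt : ∀ i, i ≤ k → ε * (-1 : ℝ) ^ i * f (t i) = M)
    (p : Polynomial ℝ) (hp : p.natDegree ≤ k - 1) :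
    ∃ s ∈ Set.Icc a b, M ≤ |f s - p.eval s| := by
  by_contra hcon
  push_neg at hcon
  -- monotonicity of t
  have hmono : ∀ i j, i < j → j ≤ k → t i < t j := by
    intro i j hij hjk
    induction j with
    | zero => omega
    | succ m ih =>
      rcases Nat.lt_or_ge i m with h | h
      · exact (ih h (by omega)).trans (htmono m (by omega))
      · have : i = m := by omega
        subst this
        exact htmono i (by omega)
  have tmem : ∀ i, i ≤ k → t i ∈ Set.Icc a b := by
    intro i hi
    constructor
    · rcases Nat.eq_zero_or_pos i with rfl | h
      · exact ht0
      · exact le_trans ht0 (hmono 0 i h hi).le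
    · rcases Nat.lt_or_ge i k with h | h
      · exact le_trans (hmono i k h le_rfl).le htk
      · have : i = k := by omega
        subst this; exact htk
  have hε1 : ∀ i : ℕ, |ε * (-1 : ℝ) ^ i| = 1 := by
    intro i
    rcases hε with rfl | rfl <;> simp [abs_mul]
  -- sign alternation of p at the t i
  have hpos : ∀ i, i ≤ k → 0 < ε * (-1 : ℝ) ^ i * p.eval (t i) := by
    intro i hi
    have h1 : |f (t i) - p.eval (t i)| < M := hcon _ (tmem i hi)
    have h2 : ε * (-1 : ℝ) ^ i * (f (t i) - p.eval (t i)) ≤ |f (t i) - p.eval (t i)| := by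
      calc ε * (-1 : ℝ) ^ i * (f (t i) - p.eval (t i))
          ≤ |ε * (-1 : ℝ) ^ i * (f (t i) - p.eval (t i))| := le_abs_self _
        _ = |f (t i) - p.eval (t i)| := by rw [abs_mul, hε1, one_mul]
    have h3 := halt i hi
    nlinarith
  -- roots of p in each (t i, t (i+1))
  have hroot : ∀ i, i < k → ∃ s ∈ Set.Ioo (t i) (t (i+1)), p.eval s = 0 := by
    intro i hi
    have hc : ContinuousOn (fun x => p.eval x) (Set.Icc (t i) (t (i+1))) :=
      p.continuous_aeval.continuousOn
    have h1 := hpos i (by omega)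
    have h2 := hpos (i+1) (by omega)
    have hle : t i ≤ t (i+1) := (htmono i hi).le
    rcases hε with rfl | rfl
    · rcases Nat.even_or_odd i with he | ho
      · have e1 : (-1:ℝ)^i = 1 := he.neg_one_pow
        have e2 : (-1:ℝ)^(i+1) = -1 := by rw [pow_succ, e1]; ring
        rw [e1] at h1; rw [e2] at h2
        have : (0:ℝ) ∈ Set.Ioo (p.eval (t (i+1))) (p.eval (t i)) :=
          ⟨by linarith, by linarith⟩
        obtain ⟨s, hs, hse⟩ := intermediate_value_Ioo' hle hc this
        exact ⟨s, hs, hse⟩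
      · have e1 : (-1:ℝ)^i = -1 := ho.neg_one_pow
        have e2 : (-1:ℝ)^(i+1) = 1 := by rw [pow_succ, e1]; ring
        rw [e1] at h1; rw [e2] at h2
        have : (0:ℝ) ∈ Set.Ioo (p.eval (t i)) (p.eval (t (i+1))) :=
          ⟨by linarith, by linarith⟩
        obtain ⟨s, hs, hse⟩ := intermediate_value_Ioo hle hc this
        exact ⟨s, hs, hse⟩
    · rcases Nat.even_or_odd i with he | ho
      · have e1 : (-1:ℝ)^i = 1 := he.neg_one_pow
        have e2 : (-1:ℝ)^(i+1) = -1 := by rw [pow_succ, e1]; ring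
        rw [e1] at h1; rw [e2] at h2
        have : (0:ℝ) ∈ Set.Ioo (p.eval (t i)) (p.eval (t (i+1))) :=
          ⟨by linarith, by linarith⟩
        obtain ⟨s, hs, hse⟩ := intermediate_value_Ioo hle hc this
        exact ⟨s, hs, hse⟩
      · have e1 : (-1:ℝ)^i = -1 := ho.neg_one_pow
        have e2 : (-1:ℝ)^(i+1) = 1 := by rw [pow_succ, e1]; ring
        rw [e1] at h1; rw [e2] at h2
        have : (0:ℝ) ∈ Set.Ioo (p.eval (t (i+1))) (p.eval (t i)) :=
          ⟨by linarith, by linarith⟩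
        obtain ⟨s, hs, hse⟩ := intermediate_value_Ioo' hle hc this
        exact ⟨s, hs, hse⟩
  choose! s hsmem hsz using hroot
  -- the s i for i < k are injective
  have hsinj : Function.Injective (fun i : Fin k => s i) := by
    have key : ∀ i j : Fin k, (i : ℕ) < (j : ℕ) → s i < s j := by
      intro i j hij
      have h1 := hsmem i i.isLt
      have h2 := hsmem j j.isLt
      calc s (i:ℕ) < t (i+1) := h1.2
        _ ≤ t j := by
            rcases Nat.lt_or_ge (i+1) j with h | h
            · exact (hmono _ _ h (by omega)).le
            · have : (i:ℕ)+1 = j := by omega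
              rw [this]
        _ < s (j:ℕ) := h2.1
    intro i j hij
    simp only at hij
    rcases lt_trichotomy (i:ℕ) (j:ℕ) with h | h | h
    · exact absurd hij (key i j h).ne
    · exact Fin.ext h
    · exact absurd hij.symm (key j i h).ne
  have hp0 : p = 0 := by
    apply Polynomial.eq_zero_of_natDegree_lt_card_of_eval_eq_zero p hsinj
    · intro i; exact hsz i i.isLt
    · rw [Fintype.card_fin]; omega
  have := hpos 0 (by omega)
  rw [hp0] at this
  simp at this
end

section
/- Let f:[a,b]→ℝ be continuous with max f = -min f = M > 0, let β ∈ (0,1], and suppose a ≤ t₀ < t₁ < ⋯ < t_k ≤ b is a β-alternating sequence, i.e., there is ε ∈ {-1,1} with ε(-1)^i f(t_i) ≥ βM for all i. Then for any polynomial p of degree at most k-1, ‖f - p‖_∞ ≥ β‖f‖_∞. -/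
/-- a β-alternating sequence of length k+1 forces any polynomial of
degree at most k-1 to be at sup-distance at least β‖f‖ from f. -/
theorem beta_alternance_lower_bound
    (a b M β : ℝ) (hab : a < b) (f : ℝ → ℝ)
    (hf : ContinuousOn f (Set.Icc a b))
    (hM : 0 < M) (hβ : 0 < β) (hβ1 : β ≤ 1)
    (hub : ∀ t ∈ Set.Icc a b, f t ≤ M)
    (hlb : ∀ t ∈ Set.Icc a b, -M ≤ f t)
    (hmax : ∃ t ∈ Set.Icc a b, f t = M)
    (hmin : ∃ t ∈ Set.Icc a b, f t = -M)
    (k : ℕ) (hk : 1 ≤ k) (ε : ℝ) (hε : ε = 1 ∨ ε = -1)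
    (t : ℕ → ℝ)
    (ht0 : a ≤ t 0) (htk : t k ≤ b)
    (htmono : ∀ i, i < k → t i < t (i + 1))
    (halt : ∀ i, i ≤ k → β * M ≤ ε * (-1 : ℝ) ^ i * f (t i))
    (p : Polynomial ℝ) (hp : p.natDegree ≤ k - 1) :
    ∃ s ∈ Set.Icc a b, β * M ≤ |f s - p.eval s| := by
  by_contra hcon
  push_neg at hcon
  have hε2 : ε * ε = 1 := by rcases hε with h | h <;> rw [h] <;> ring
  have hεabs : |ε| = 1 := by rcases hε with h | h <;> rw [h] <;> simp
  -- monotonicity of t up to k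
  have hmono : ∀ j, j ≤ k → ∀ i, i < j → t i < t j := by
    intro j hj
    induction j with
    | zero => intro i hi; omega
    | succ n ih =>
      intro i hi
      have hn : n < k := by omega
      rcases Nat.lt_succ_iff_lt_or_eq.mp hi with h | h
      · exact lt_trans (ih (le_of_lt hn) i h) (htmono n hn)
      · rw [h]; exact htmono n hn
  have htIcc : ∀ i, i ≤ k → t i ∈ Set.Icc a b := by
    intro i hi
    constructor
    · rcases Nat.eq_zero_or_pos i with h | h
      · rw [h]; exact ht0
      · exact le_trans ht0 (le_of_lt (hmono i hi 0 h))
    · rcases eq_or_lt_of_le hi with h | h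
      · rw [h]; exact htk
      · exact le_trans (le_of_lt (hmono k le_rfl i h)) htk
  -- sign alternation of p
  have hsign : ∀ i, i ≤ k → 0 < ε * (-1 : ℝ) ^ i * p.eval (t i) := by
    intro i hi
    have h1 := halt i hi
    have h2 := hcon (t i) (htIcc i hi)
    have h3 : ε * (-1 : ℝ) ^ i * (f (t i) - p.eval (t i)) ≤ |f (t i) - p.eval (t i)| := by
      calc ε * (-1 : ℝ) ^ i * (f (t i) - p.eval (t i))
          ≤ |ε * (-1 : ℝ) ^ i * (f (t i) - p.eval (t i))| := le_abs_self _
        _ = |f (t i) - p.eval (t i)| := by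
            rw [abs_mul, abs_mul, hεabs, abs_pow, abs_neg, abs_one, one_pow]; ring
    nlinarith [h1, h2, h3]
  -- p ≠ 0
  have hp0 : p ≠ 0 := by
    intro h
    have := hsign 0 (Nat.zero_le k)
    rw [h] at this; simp at this
  -- roots in each gap
  have hroot : ∀ i, i < k → ∃ r ∈ Set.Ioo (t i) (t (i + 1)), p.eval r = 0 := by
    intro i hi
    have hprod : p.eval (t i) * p.eval (t (i + 1)) < 0 := by
      have h1 := hsign i (le_of_lt hi)
      have h2 := hsign (i + 1) hi
      have : 0 < (ε * (-1 : ℝ) ^ i * p.eval (t i)) * (ε * (-1 : ℝ) ^ (i + 1) * p.eval (t (i + 1))) :=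
        mul_pos h1 h2
      have hh : (ε * (-1 : ℝ) ^ i * p.eval (t i)) * (ε * (-1 : ℝ) ^ (i + 1) * p.eval (t (i + 1)))
          = -(p.eval (t i) * p.eval (t (i + 1))) := by
        have hodd : ((-1 : ℝ)) ^ i * (-1 : ℝ) ^ (i + 1) = -1 := by
          rw [← pow_add]; rw [Odd.neg_one_pow ⟨i, by ring⟩]
        calc (ε * (-1 : ℝ) ^ i * p.eval (t i)) * (ε * (-1 : ℝ) ^ (i + 1) * p.eval (t (i + 1)))
            = (ε * ε) * ((-1 : ℝ) ^ i * (-1 : ℝ) ^ (i + 1)) *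
              (p.eval (t i) * p.eval (t (i + 1))) := by ring
          _ = -(p.eval (t i) * p.eval (t (i + 1))) := by rw [hε2, hodd]; ring
      linarith [hh ▸ this]
    have hcont : ContinuousOn (fun x => p.eval x) (Set.Icc (t i) (t (i + 1))) :=
      p.continuous_aeval.continuousOn
    have hlt := htmono i hi
    rcases lt_or_ge (p.eval (t i)) 0 with hneg | hpos
    · have hpos' : 0 < p.eval (t (i + 1)) := by nlinarith
      have := intermediate_value_Ioo (le_of_lt hlt) hcont
      have h0 : (0 : ℝ) ∈ Set.Ioo (p.eval (t i)) (p.eval (t (i + 1))) := ⟨hneg, hpos'⟩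
      obtain ⟨r, hr, hr0⟩ := this h0
      exact ⟨r, hr, hr0⟩
    · have hpos1 : 0 < p.eval (t i) := by
        rcases eq_or_lt_of_le hpos with h | h
        · exfalso; rw [← h] at hprod; simp at hprod
        · exact h
      have hneg' : p.eval (t (i + 1)) < 0 := by nlinarith
      have := intermediate_value_Ioo' (le_of_lt hlt) hcont
      have h0 : (0 : ℝ) ∈ Set.Ioo (p.eval (t (i + 1))) (p.eval (t i)) := ⟨hneg', hpos1⟩
      obtain ⟨r, hr, hr0⟩ := this h0
      exact ⟨r, hr, hr0⟩
  have hroot' : ∀ i : Fin k, ∃ x ∈ Set.Ioo (t i.1) (t (i.1 + 1)), p.eval x = 0 :=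
    fun i => hroot i.1 i.2
  choose r hrmem hr0 using hroot'
  have htle : ∀ i j : ℕ, i ≤ j → j ≤ k → t i ≤ t j := by
    intro i j hij hjk
    rcases eq_or_lt_of_le hij with h | h
    · rw [h]
    · exact le_of_lt (hmono j hjk i h)
  have hrlt : ∀ i j : Fin k, i < j → r i < r j := by
    intro i j hij
    have h1 : r i < t (i.1 + 1) := (hrmem i).2
    have h2 : t j.1 < r j := (hrmem j).1
    have h3 : t (i.1 + 1) ≤ t j.1 := htle _ _ (by omega) (le_of_lt j.2)
    linarith
  have hrinj : Function.Injective r := by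
    intro i j hij
    rcases lt_trichotomy i j with h | h | h
    · exact absurd hij (ne_of_lt (hrlt i j h))
    · exact h
    · exact absurd hij (ne_of_gt (hrlt j i h))
  have hsub : Finset.image r Finset.univ ⊆ p.roots.toFinset := by
    intro x hx
    simp only [Finset.mem_image] at hx
    obtain ⟨i, _, rfl⟩ := hx
    rw [Multiset.mem_toFinset, Polynomial.mem_roots hp0]
    exact hr0 i
  have hcard : k ≤ p.natDegree := by
    calc k = (Finset.image r Finset.univ).card := by
            rw [Finset.card_image_of_injective _ hrinj, Finset.card_univ, Fintype.card_fin]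
      _ ≤ p.roots.toFinset.card := Finset.card_le_card hsub
      _ ≤ Multiset.card p.roots := Multiset.toFinset_card_le _
      _ ≤ p.natDegree := Polynomial.card_roots' p
  omega
end

section
/- Let f:[a,b]→ℝ be continuous and suppose there exist disjoint closed intervals [t_i^-, t_i^+], i = 0,…,k (with t_i^+ < t_{i+1}^-), ε ∈ {-1,1}, and M = ‖f‖_∞ > 0, such that -M < ε(-1)^i f(t) ≤ M on each [t_i^-, t_i^+] and |f(t)| < M for all other t ∈ [a,b]. Let ξ_i ∈ (t_i^+, t_{i+1}^-) for i = 0,…,k-1 and define γ(t) = ε ∏_{i=0}^{k-1}(ξ_i - t). Then for all sufficiently small λ > 0, ‖f - λγ‖_∞ < ‖f‖_∞. -/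
/-- subtracting a small positive multiple of the polynomial
γ(t) = ε ∏ (ξ_i - t), whose roots separate the alternating extreme intervals of f,
strictly decreases the sup norm. -/
theorem small_correction_decreases_norm
    (a b M : ℝ) (hab : a < b) (f : ℝ → ℝ)
    (hf : ContinuousOn f (Set.Icc a b))
    (hM : 0 < M)
    (hMnorm : ∀ t ∈ Set.Icc a b, |f t| ≤ M)
    (k : ℕ) (hk : 1 ≤ k) (ε : ℝ) (hε : ε = 1 ∨ ε = -1)
    (tm tp : ℕ → ℝ)
    (h0 : a ≤ tm 0) (hkb : tp k ≤ b)
    (hord : ∀ i, i ≤ k → tm i ≤ tp i)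
    (hsep : ∀ i, i < k → tp i < tm (i + 1))
    (hin : ∀ i, i ≤ k → ∀ t ∈ Set.Icc (tm i) (tp i),
      -M < ε * (-1 : ℝ) ^ i * f t ∧ ε * (-1 : ℝ) ^ i * f t ≤ M)
    (hout : ∀ t ∈ Set.Icc a b,
      (∀ i, i ≤ k → t ∉ Set.Icc (tm i) (tp i)) → |f t| < M)
    (ξ : ℕ → ℝ)
    (hξ : ∀ i, i < k → ξ i ∈ Set.Ioo (tp i) (tm (i + 1))) :
    ∃ lam0 > 0, ∀ lam : ℝ, 0 < lam → lam ≤ lam0 →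
      ∀ t ∈ Set.Icc a b,
        |f t - lam * (ε * ∏ i ∈ Finset.range k, (ξ i - t))| < M := by
  set γ : ℝ → ℝ := fun t => ε * ∏ i ∈ Finset.range k, (ξ i - t) with hγdef
  have hεsq : ε * ε = 1 := by rcases hε with h | h <;> simp [h]
  have hγc : Continuous γ := by
    apply continuous_const.mul
    exact continuous_finset_prod _ (fun i _ => continuous_const.sub continuous_id)
  -- monotonicity of the interval endpoints
  have mono : ∀ m n, m ≤ n → n ≤ k → tm m ≤ tm n ∧ tp m ≤ tp n := by
    intro m n hmn hnk
    induction hmn with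
    | refl => exact ⟨le_rfl, le_rfl⟩
    | @step n h ih =>
      have hnk' : n ≤ k := le_trans (Nat.le_succ n) hnk
      have hnk'' : n < k := hnk
      obtain ⟨ih1, ih2⟩ := ih hnk'
      have h1 := hord n hnk'
      have h2 := hsep n hnk''
      have h3 := hord (n + 1) hnk
      exact ⟨by linarith, by linarith⟩
  -- sign of γ on the i-th extreme interval
  have hsign : ∀ i, i ≤ k → ∀ t ∈ Set.Icc (tm i) (tp i), 0 < ε * (-1:ℝ)^i * γ t := by
    intro i hik t ht
    have hsplit : (∏ j ∈ Finset.range i, (ξ j - t)) * (∏ j ∈ Finset.Ico i k, (ξ j - t))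
        = ∏ j ∈ Finset.range k, (ξ j - t) := Finset.prod_range_mul_prod_Ico _ hik
    have hneg : ∀ n : ℕ, ∏ j ∈ Finset.range n, (t - ξ j)
        = (-1:ℝ)^n * ∏ j ∈ Finset.range n, (ξ j - t) := by
      intro n
      induction n with
      | zero => simp
      | succ n ih => rw [Finset.prod_range_succ, Finset.prod_range_succ, ih, pow_succ]; ring
    have h1 : 0 < ∏ j ∈ Finset.range i, (t - ξ j) := by
      apply Finset.prod_pos
      intro j hj
      have hj' : j < i := Finset.mem_range.mp hj
      have hjk : j < k := lt_of_lt_of_le hj' hik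
      have hx := (hξ j hjk).2
      have h2 := (mono (j + 1) i hj' hik).1
      have := ht.1
      linarith
    have h2 : 0 < ∏ j ∈ Finset.Ico i k, (ξ j - t) := by
      apply Finset.prod_pos
      intro j hj
      obtain ⟨hij, hjk⟩ := Finset.mem_Ico.mp hj
      have hx := (hξ j hjk).1
      have h3 := (mono i j hij hjk.le).2
      have := ht.2
      linarith
    have hγt : γ t = ε * ∏ j ∈ Finset.range k, (ξ j - t) := rfl
    have heq : ε * (-1:ℝ)^i * γ t
        = (ε * ε) * ((∏ j ∈ Finset.range i, (t - ξ j)) * ∏ j ∈ Finset.Ico i k, (ξ j - t)) := by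
      rw [hγt, ← hsplit, hneg i]; ring
    rw [heq, hεsq, one_mul]
    exact mul_pos h1 h2
  -- bound C for |γ| on [a, b]
  obtain ⟨c0, hc0, hC⟩ := isCompact_Icc.exists_isMaxOn (Set.nonempty_Icc.mpr hab.le)
    (hγc.abs.continuousOn (s := Set.Icc a b))
  set C := |γ c0| with hCdef
  have hC0 : 0 ≤ C := abs_nonneg _
  -- the "bad" compact set
  set K : Set ℝ := {s : ℝ | s ∈ Set.Icc a b ∧ (f s * γ s ≤ 0 ∨ |f s| ≤ M / 2)} with hKdef
  have hKsub : K ⊆ Set.Icc a b := fun s hs => hs.1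
  have hKcl : IsClosed K := by
    have h1 : IsClosed (Set.Icc a b ∩ (fun s => f s * γ s) ⁻¹' Set.Iic 0) :=
      (hf.mul hγc.continuousOn).preimage_isClosed_of_isClosed isClosed_Icc isClosed_Iic
    have h2 : IsClosed (Set.Icc a b ∩ (fun s => |f s|) ⁻¹' Set.Iic (M / 2)) :=
      hf.abs.preimage_isClosed_of_isClosed isClosed_Icc isClosed_Iic
    have : K = (Set.Icc a b ∩ (fun s => f s * γ s) ⁻¹' Set.Iic 0)
        ∪ (Set.Icc a b ∩ (fun s => |f s|) ⁻¹' Set.Iic (M / 2)) := by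
      ext s
      simp only [hKdef, Set.mem_setOf_eq, Set.mem_union, Set.mem_inter_iff, Set.mem_preimage,
        Set.mem_Iic]
      tauto
    rw [this]
    exact h1.union h2
  have hKcp : IsCompact K := isCompact_Icc.of_isClosed_subset hKcl hKsub
  -- on K, |f| < M
  have hKlt : ∀ s ∈ K, |f s| < M := by
    intro s hs
    obtain ⟨hsI, hcond⟩ := hs
    by_contra hge
    push_neg at hge
    have heq : |f s| = M := le_antisymm (hMnorm s hsI) hge
    have hex : ∃ i, i ≤ k ∧ s ∈ Set.Icc (tm i) (tp i) := by
      by_contra hno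
      push_neg at hno
      exact absurd heq (ne_of_lt (hout s hsI hno))
    obtain ⟨i, hik, hsi⟩ := hex
    have hu := hin i hik s hsi
    have hg := hsign i hik s hsi
    have hii : ((-1:ℝ)^i) * ((-1:ℝ)^i) = 1 := by
      rw [← pow_add]
      exact Even.neg_one_pow ⟨i, rfl⟩
    have habs : |ε * (-1:ℝ)^i * f s| = M := by
      rw [abs_mul, abs_mul]
      have hε1 : |ε| = 1 := by rcases hε with h | h <;> simp [h]
      have hi1 : |(-1:ℝ)^i| = 1 := by rw [abs_pow, abs_neg, abs_one, one_pow]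
      rw [hε1, hi1, heq, one_mul, one_mul]
    have huM : ε * (-1:ℝ)^i * f s = M := by
      rcases abs_eq hM.le |>.mp habs with h | h
      · exact h
      · linarith [hu.1]
    have hrw : f s * γ s = (ε * (-1:ℝ)^i * f s) * (ε * (-1:ℝ)^i * γ s) := by
      linear_combination (-(f s * γ s) * ((-1:ℝ)^i * (-1:ℝ)^i)) * hεsq - (f s * γ s) * hii
    have hfgpos : 0 < f s * γ s := by
      rw [hrw, huM]
      exact mul_pos hM hg
    rcases hcond with h | h
    · linarith
    · linarith
  -- a strict bound M' < M for |f| on K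
  obtain ⟨M', hM'lt, hM'bd⟩ : ∃ M', M' < M ∧ ∀ s ∈ K, |f s| ≤ M' := by
    rcases Set.eq_empty_or_nonempty K with hKe | hKne
    · refine ⟨M / 2, by linarith, ?_⟩
      intro s hs
      rw [hKe] at hs
      exact absurd hs (Set.notMem_empty s)
    · obtain ⟨t0, ht0K, ht0max⟩ := hKcp.exists_isMaxOn hKne ((hf.mono hKsub).abs)
      exact ⟨|f t0|, hKlt t0 ht0K, fun s hs => ht0max hs⟩
  refine ⟨min ((M - M') / (C + 1)) (M / (2 * (C + 1))), ?_, ?_⟩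
  · apply lt_min
    · apply div_pos (by linarith) (by positivity)
    · positivity
  intro lam hlam hlamle t htab
  show |f t - lam * γ t| < M
  have hlam1 : lam * (C + 1) ≤ M - M' := by
    have h := le_trans hlamle (min_le_left _ _)
    rwa [le_div_iff₀ (by positivity)] at h
  have hlam2 : lam * (2 * (C + 1)) ≤ M := by
    have h := le_trans hlamle (min_le_right _ _)
    rwa [le_div_iff₀ (by positivity)] at h
  have hγb : |γ t| ≤ C := hC htab
  by_cases htK : t ∈ K
  · -- on K: crude triangle-inequality bound
    have hA : |f t - lam * γ t| ≤ |f t| + lam * |γ t| := by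
      have h := abs_add_le (f t) (-(lam * γ t))
      simpa [sub_eq_add_neg, abs_mul, abs_of_pos hlam] using h
    have hfb : |f t| ≤ M' := hM'bd t htK
    have h1 : lam * |γ t| ≤ lam * C := mul_le_mul_of_nonneg_left hγb hlam.le
    nlinarith
  · -- off K: sign argument
    have hpq : ¬(f t * γ t ≤ 0 ∨ |f t| ≤ M / 2) := fun h => htK ⟨htab, h⟩
    push_neg at hpq
    obtain ⟨hfg, hfhalf⟩ := hpq
    have hγne : 0 < |γ t| := by
      rw [abs_pos]
      intro h0
      rw [h0, mul_zero] at hfg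
      exact lt_irrefl 0 hfg
    have hfγeq : f t * γ t = |f t| * |γ t| := by
      rw [← abs_mul]
      exact (abs_of_pos hfg).symm
    have hlg : lam * |γ t| ≤ M / 2 := by
      have h1 : lam * |γ t| ≤ lam * C := mul_le_mul_of_nonneg_left hγb hlam.le
      nlinarith
    have hfM : |f t| ≤ M := hMnorm t htab
    have hinner : 0 < 2 * (f t * γ t) - lam * (γ t) ^ 2 := by
      have h1 : lam * |γ t| * |γ t| ≤ M / 2 * |γ t| :=
        mul_le_mul_of_nonneg_right hlg (abs_nonneg _)
      have h2 : M / 2 * |γ t| < |f t| * |γ t| :=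
        mul_lt_mul_of_pos_right hfhalf hγne
      nlinarith [sq_abs (γ t)]
    have key : 0 < lam * (2 * (f t * γ t) - lam * (γ t) ^ 2) := mul_pos hlam hinner
    have hf2 : (f t) ^ 2 ≤ M ^ 2 := by nlinarith [sq_abs (f t), abs_nonneg (f t)]
    have hsq : (f t - lam * γ t) ^ 2 < M ^ 2 := by nlinarith
    exact abs_lt_of_sq_lt_sq hsq hM.le
end

section
/- Let f:[a,b]→ℝ be continuous with M := max f = -min f > 0, and let k(β) be as in the canonical β-alternance construction. Then there exists β̂ ∈ (0,1) such that k(β) = k(1) for all β ∈ (β̂, 1]. -/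
/-- The set of integers k such that f admits a β-alternating sequence
t₀ < ⋯ < t_k in [a,b] at level βM. -/
def altSet (f : ℝ → ℝ) (a b M β : ℝ) : Set ℕ :=
  {k | ∃ ε : ℝ, (ε = 1 ∨ ε = -1) ∧ ∃ t : ℕ → ℝ,
    a ≤ t 0 ∧ t k ≤ b ∧ (∀ i, i < k → t i < t (i + 1)) ∧
    (∀ i, i ≤ k → t i ∈ Set.Icc a b) ∧
    (∀ i, i ≤ k → β * M ≤ ε * (-1 : ℝ) ^ i * f (t i))}

/-- k(β): the largest number of alternations at level βM. -/
noncomputable def kAlt (f : ℝ → ℝ) (a b M β : ℝ) : ℕ :=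
  sSup (altSet f a b M β)

/-!
Every β-alternating sequence is β'-alternating for β' ≤ β, and truncations of alternating
sequences alternate, so it suffices that `k(1) + 1` alternations are impossible at all levels
close to `M`. Extending a sequence of `m + 1` points constantly past its last point makes the
candidates a compact set of pairs `(ε, t)`, on which the level `min_{i ≤ m} ε (-1)^i f(t i)` they
reach is continuous and so attains a maximum; if `m` alternations fail at level `M`, this maximum
is some `β̂M` with `β̂ < 1`, and they fail at every level above it. That `k(1)` is finite follows
from uniform continuity: consecutive points of an alternating sequence are uniformly far apart.
-/

open Set

variable {f : ℝ → ℝ} {a b M : ℝ}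

lemma altSet_anti (hM : 0 ≤ M) : Antitone (altSet f a b M) := by
  rintro β' β h k ⟨ε, hε, t, h0, hb, hstr, hIcc, hlev⟩
  exact ⟨ε, hε, t, h0, hb, hstr, hIcc, fun i hi =>
    (mul_le_mul_of_nonneg_right h hM).trans (hlev i hi)⟩

lemma mem_altSet_of_le {β : ℝ} {j k : ℕ} (hjk : j ≤ k) (hk : k ∈ altSet f a b M β) :
    j ∈ altSet f a b M β := by
  obtain ⟨ε, hε, t, h0, -, hstr, hIcc, hlev⟩ := hk
  exact ⟨ε, hε, t, h0, (hIcc j hjk).2, fun i hi => hstr i (hi.trans_le hjk),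
    fun i hi => hIcc i (hi.trans hjk), fun i hi => hlev i (hi.trans hjk)⟩

lemma two_mul_le_abs_sub_of_alternating {ε c x y : ℝ} (hε : ε = 1 ∨ ε = -1) (i : ℕ)
    (hx : c ≤ ε * (-1) ^ i * x) (hy : c ≤ ε * (-1) ^ (i + 1) * y) : 2 * c ≤ |x - y| := by
  rw [pow_succ] at hy
  rcases hε with rfl | rfl <;> rcases neg_one_pow_eq_or ℝ i with h | h <;> rw [h] at hx hy <;>
    cases abs_cases (x - y) <;> linarith

lemma altSet_bddAbove (hf : ContinuousOn f (Icc a b)) {β : ℝ} (hβM : 0 < β * M) :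
    BddAbove (altSet f a b M β) := by
  obtain ⟨δ, hδ, hclose⟩ := Metric.uniformContinuousOn_iff.1
    (isCompact_Icc.uniformContinuousOn_of_continuous hf) (β * M) hβM
  refine ⟨⌊(b - a) / δ⌋₊, fun k ⟨ε, hε, t, h0, hb, hstr, hIcc, hlev⟩ => ?_⟩
  have hgap : ∀ i ∈ Finset.range k, δ ≤ t (i + 1) - t i := by
    intro i hi
    have hik := Finset.mem_range.1 hi
    by_contra! hnear
    have hdist : dist (t (i + 1)) (t i) < δ := by
      rw [Real.dist_eq, abs_of_pos (sub_pos.2 (hstr i hik))]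
      exact hnear
    have hfar := two_mul_le_abs_sub_of_alternating hε i (hlev i hik.le) (hlev (i + 1) hik)
    have hfclose := hclose _ (hIcc (i + 1) hik) _ (hIcc i hik.le) hdist
    rw [Real.dist_eq, abs_sub_comm] at hfclose
    linarith
  have hspread := Finset.card_nsmul_le_sum (Finset.range k) _ δ hgap
  rw [Finset.sum_range_sub, Finset.card_range, nsmul_eq_mul] at hspread
  exact Nat.le_floor ((le_div_iff₀ hδ).2 (by linarith))

def alternationDomain (a b : ℝ) (m : ℕ) : Set (ℝ × (ℕ → ℝ)) :=
  ({1, -1} ×ˢ univ.pi fun _ => Icc a b) ∩ {p | MonotoneOn p.2 (Iic m)}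

noncomputable def alternationLevel (f : ℝ → ℝ) (m : ℕ) (p : ℝ × (ℕ → ℝ)) : ℝ :=
  (Finset.range (m + 1)).inf' Finset.nonempty_range_add_one fun i => p.1 * (-1) ^ i * f (p.2 i)

lemma isCompact_alternationDomain (a b : ℝ) (m : ℕ) : IsCompact (alternationDomain a b m) :=
  ((toFinite _).isCompact.prod (isCompact_univ_pi fun _ => isCompact_Icc)).inter_right
    (isClosed_monotoneOn.preimage continuous_snd)

lemma alternationDomain_nonempty (hab : a ≤ b) (m : ℕ) : (alternationDomain a b m).Nonempty :=
  ⟨(1, fun _ => a), ⟨by simp, fun _ _ => left_mem_Icc.2 hab⟩, monotoneOn_const⟩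

lemma continuousOn_alternationLevel (hf : ContinuousOn f (Icc a b)) (m : ℕ) :
    ContinuousOn (alternationLevel f m) (alternationDomain a b m) := by
  refine ContinuousOn.finset_inf'_apply _ fun i _ => ?_
  have hpoint : ContinuousOn (fun p : ℝ × (ℕ → ℝ) => f (p.2 i)) (alternationDomain a b m) :=
    hf.comp (continuous_apply i |>.comp continuous_snd).continuousOn
      fun p hp => hp.1.2 i (mem_univ i)
  exact (continuous_fst.mul continuous_const).continuousOn.mul hpoint

lemma mem_altSet_iff_exists_le_alternationLevel {β : ℝ} {m : ℕ} (hβM : 0 < β * M) :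
    m ∈ altSet f a b M β ↔ ∃ p ∈ alternationDomain a b m, β * M ≤ alternationLevel f m p := by
  constructor
  · rintro ⟨ε, hε, t, -, -, hstr, hIcc, hlev⟩
    have hmono : StrictMonoOn t (Iic m) :=
      strictMonoOn_of_lt_add_one ordConnected_Iic fun i _ _ hi => hstr i hi
    refine ⟨(ε, fun i => t (min i m)), ⟨⟨?_, fun i _ => hIcc _ (min_le_right i m)⟩, ?_⟩, ?_⟩
    · rcases hε with rfl | rfl <;> simp
    · intro i hi j hj hij
      simp only [min_eq_left (mem_Iic.1 hi), min_eq_left (mem_Iic.1 hj)]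
      exact hmono.monotoneOn hi hj hij
    · refine Finset.le_inf' _ _ fun i hi => ?_
      have him : i ≤ m := Nat.lt_succ_iff.1 (Finset.mem_range.1 hi)
      simpa only [min_eq_left him] using hlev i him
  · rintro ⟨⟨ε, t⟩, ⟨⟨hε, hIcc⟩, hmono⟩, hlevel⟩
    have hlev : ∀ i ≤ m, β * M ≤ ε * (-1) ^ i * f (t i) := fun i hi =>
      hlevel.trans (Finset.inf'_le _ (Finset.mem_range.2 (Nat.lt_succ_of_le hi)))
    have hε : ε = 1 ∨ ε = -1 := by simpa using hε
    refine ⟨ε, hε, t, (hIcc 0 (mem_univ _)).1, (hIcc m (mem_univ _)).2, fun i hi => ?_,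
      fun i _ => hIcc i (mem_univ _), hlev⟩
    refine (hmono (mem_Iic.2 hi.le) (mem_Iic.2 hi) (Nat.le_succ i)).lt_of_ne
      fun (heq : t i = t (i + 1)) => ?_
    -- equal consecutive points cannot carry opposite signs of size `βM > 0`
    have := two_mul_le_abs_sub_of_alternating hε i (hlev i hi.le) (hlev (i + 1) hi)
    rw [heq, sub_self, abs_zero] at this
    linarith

lemma exists_forall_notMem_altSet (hab : a ≤ b) (hf : ContinuousOn f (Icc a b)) (hM : 0 < M)
    {m : ℕ} (hm : m ∉ altSet f a b M 1) :
    ∃ βhat : ℝ, 0 < βhat ∧ βhat < 1 ∧ ∀ β, βhat < β → m ∉ altSet f a b M β := by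
  obtain ⟨p, hp, hpmax⟩ := (isCompact_alternationDomain a b m).exists_isMaxOn
    (alternationDomain_nonempty hab m) (continuousOn_alternationLevel hf m)
  have hlevel : alternationLevel f m p < M := by
    by_contra! h
    exact hm ((mem_altSet_iff_exists_le_alternationLevel (by simpa using hM)).2
      ⟨p, hp, by simpa using h⟩)
  refine ⟨max (1 / 2) (alternationLevel f m p / M), by positivity,
    max_lt (by norm_num) ((div_lt_one hM).2 hlevel), fun β hβ hmem => ?_⟩
  have hβpos : 0 < β := lt_of_lt_of_le (by norm_num) ((le_max_left _ _).trans hβ.le)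
  obtain ⟨q, hq, hqlevel⟩ :=
    (mem_altSet_iff_exists_le_alternationLevel (mul_pos hβpos hM)).1 hmem
  have hpβ : alternationLevel f m p < β * M := (div_lt_iff₀ hM).1 ((le_max_right _ _).trans_lt hβ)
  linarith [isMaxOn_iff.1 hpmax q hq]

theorem kAlt_eventually_constant_general
    (a b M : ℝ) (hab : a < b) (f : ℝ → ℝ)
    (hf : ContinuousOn f (Set.Icc a b))
    (hM : 0 < M) :
    ∃ βhat : ℝ, 0 < βhat ∧ βhat < 1 ∧
      ∀ β : ℝ, βhat < β → β ≤ 1 → kAlt f a b M β = kAlt f a b M 1 := by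
  set k₁ := kAlt f a b M 1
  have hk₁ : k₁ + 1 ∉ altSet f a b M 1 := fun h =>
    (le_csSup (altSet_bddAbove hf (by simpa using hM)) h).not_gt (Nat.lt_succ_self k₁)
  obtain ⟨βhat, hpos, hlt, hβhat⟩ := exists_forall_notMem_altSet hab.le hf hM hk₁
  refine ⟨βhat, hpos, hlt, fun β hβ hβ1 => ?_⟩
  have hupper : k₁ ∈ upperBounds (altSet f a b M β) := fun k hk => by
    by_contra! h
    exact hβhat β hβ (mem_altSet_of_le h hk)
  exact le_antisymm (csSup_le' hupper) (csSup_le_csSup' ⟨k₁, hupper⟩ (altSet_anti hM.le hβ1))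

/-- there exists β̂ ∈ (0,1) such that k(β) = k(1) for all
β ∈ (β̂, 1]. -/
theorem kAlt_eventually_constant
    (a b M : ℝ) (hab : a < b) (f : ℝ → ℝ)
    (hf : ContinuousOn f (Set.Icc a b))
    (hM : 0 < M)
    (hub : ∀ t ∈ Set.Icc a b, f t ≤ M)
    (hlb : ∀ t ∈ Set.Icc a b, -M ≤ f t)
    (hmax : ∃ t ∈ Set.Icc a b, f t = M)
    (hmin : ∃ t ∈ Set.Icc a b, f t = -M) :
    ∃ βhat : ℝ, 0 < βhat ∧ βhat < 1 ∧
      ∀ β : ℝ, βhat < β → β ≤ 1 → kAlt f a b M β = kAlt f a b M 1 :=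
  kAlt_eventually_constant_general a b M hab f hf hM
end

section
/- Let f:[a,b]→ℝ be continuous and π ∈ Π_n with M := max(π - f) and m := min(π - f) on [a,b]. If M + m ≠ 0, then π is not an optimal solution of min_{σ∈Π_n}‖σ - f‖_∞; indeed the shifted polynomial π - (M+m)/2 satisfies ‖π - (M+m)/2 - f‖_∞ ≤ ‖π - f‖_∞ - |M+m|/2 < ‖π - f‖_∞. -/
/-- if the max M and min m of π - f on [a,b] do not satisfy
M + m = 0, then shifting π by (M+m)/2 strictly decreases the sup distance,
so π is not optimal. -/
theorem unbalanced_implies_not_optimal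
    (a b M m : ℝ) (hab : a < b) (f : ℝ → ℝ)
    (hf : ContinuousOn f (Set.Icc a b))
    (n : ℕ) (π : Polynomial ℝ) (hπ : π.natDegree ≤ n)
    (hub : ∀ t ∈ Set.Icc a b, π.eval t - f t ≤ M)
    (hlb : ∀ t ∈ Set.Icc a b, m ≤ π.eval t - f t)
    (hMatt : ∃ t ∈ Set.Icc a b, π.eval t - f t = M)
    (hmatt : ∃ t ∈ Set.Icc a b, π.eval t - f t = m)
    (hMm : M + m ≠ 0) :
    (∀ t ∈ Set.Icc a b,
        |π.eval t - (M + m) / 2 - f t| ≤ max M (-m) - |M + m| / 2) ∧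
      max M (-m) - |M + m| / 2 < max M (-m) := by
  constructor
  · intro t ht
    have h1 := hub t ht
    have h2 := hlb t ht
    rw [abs_le]
    rcases abs_cases (M + m) with ⟨h, h'⟩ | ⟨h, h'⟩ <;>
      rcases max_cases M (-m) with ⟨hm1, hm2⟩ | ⟨hm1, hm2⟩ <;>
      rw [hm1] <;> constructor <;> linarith
  · have := abs_pos.mpr hMm
    linarith
end

section
/- Let f:[a,b]→ℝ be continuous, π ∈ Π_n, and suppose there exist ε ∈ {-1,1} and points a ≤ t₀ < t₁ < ⋯ < t_k ≤ b with k ≥ n+1 such that f(t_i) - π(t_i) = ε(-1)^i ‖f - π‖_∞ for all i. Then π is the unique optimal solution of min_{σ∈Π_n} ‖σ - f‖_∞: any optimal σ̂ ∈ Π_n equals π. -/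
/-- From consecutive strict increases up to `k`, pairwise. -/
lemma alt_pairwise (k : ℕ) (x : ℕ → ℝ) (h : ∀ i, i < k → x i < x (i+1)) :
    ∀ i j, i < j → j ≤ k → x i < x j := by
  intro i j
  induction j with
  | zero => omega
  | succ m ih =>
    intro hij hjk
    rcases Nat.lt_succ_iff_lt_or_eq.mp hij with h1 | h1
    · exact lt_trans (ih h1 (by omega)) (h m (by omega))
    · subst h1; exact h i (by omega)

/-- Strict alternation at k+1 ≥ n+2 points is impossible for deg ≤ n. -/
lemma alt_no_strict (n : ℕ) (p : Polynomial ℝ) (hp : p.natDegree ≤ n)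
    (k : ℕ) (hk : n + 1 ≤ k) (x : ℕ → ℝ)
    (hx : ∀ i j, i < j → j ≤ k → x i < x j)
    (ε : ℝ) (hε : ε = 1 ∨ ε = -1)
    (hs : ∀ i, i ≤ k → 0 ≤ ε * (-1:ℝ)^i * p.eval (x i))
    (hne : ∀ i, i ≤ k → p.eval (x i) ≠ 0) : False := by
  have hprod : ∀ i, i < k → p.eval (x i) * p.eval (x (i+1)) < 0 := by
    intro i hik
    have h1 := hs i (by omega)
    have h2 := hs (i+1) (by omega)
    have n1 := hne i (by omega)
    have n2 := hne (i+1) (by omega)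
    rw [pow_succ] at h2
    rcases Nat.even_or_odd i with he | he <;>
        rw [he.neg_one_pow] at h1 h2 <;>
        rcases hε with rfl | rfl <;>
        rcases lt_or_gt_of_ne n1 with hq | hq <;>
        rcases lt_or_gt_of_ne n2 with hq2 | hq2 <;>
        nlinarith
  have hroot : ∀ i : ℕ, ∃ r : ℝ, i < k → (r ∈ Set.Ioo (x i) (x (i+1)) ∧ p.eval r = 0) := by
    intro i
    by_cases hik : i < k
    · have hcont : ContinuousOn (fun y => p.eval y) (Set.Icc (x i) (x (i+1))) :=
        p.continuous.continuousOn
      have hle : x i ≤ x (i+1) := (hx i (i+1) (by omega) (by omega)).le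
      have hp2 := hprod i hik
      rcases lt_or_gt_of_ne (hne i (by omega)) with hq | hq
      · have hq2 : 0 < p.eval (x (i+1)) := by nlinarith
        obtain ⟨r, hr, hr0⟩ := intermediate_value_Ioo hle hcont (Set.mem_Ioo.mpr ⟨hq, hq2⟩)
        exact ⟨r, fun _ => ⟨hr, hr0⟩⟩
      · have hq2 : p.eval (x (i+1)) < 0 := by nlinarith
        obtain ⟨r, hr, hr0⟩ := intermediate_value_Ioo' hle hcont (Set.mem_Ioo.mpr ⟨hq2, hq⟩)
        exact ⟨r, fun _ => ⟨hr, hr0⟩⟩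
    · exact ⟨0, fun h => absurd h hik⟩
  choose r hr using hroot
  have hp0 : p ≠ 0 := fun h => hne 0 (by omega) (by rw [h]; simp)
  have hrmono : ∀ i j, i < j → j < k → r i < r j := by
    intro i j hij hjk
    have h1 := (hr i (by omega)).1
    have h2 := (hr j hjk).1
    have hxx : x (i+1) ≤ x j := by
      rcases Nat.lt_or_ge (i+1) j with h3 | h3
      · exact (hx (i+1) j h3 (by omega)).le
      · have : i + 1 = j := by omega
        rw [this]
    exact lt_of_lt_of_le h1.2 (le_trans hxx h2.1.le)
  have hinj : Set.InjOn r (Finset.range k : Finset ℕ) := by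
    intro i hi j hj hij
    simp only [Finset.coe_range, Set.mem_Iio] at hi hj
    by_contra hne'
    rcases Nat.lt_or_ge i j with hlt | hge
    · exact absurd hij (ne_of_lt (hrmono i j hlt hj))
    · have : j < i := by omega
      exact absurd hij.symm (ne_of_lt (hrmono j i this hi))
  have hsub : (Finset.range k).image r ⊆ p.roots.toFinset := by
    intro y hy
    simp only [Finset.mem_image, Finset.mem_range] at hy
    obtain ⟨i, hik, rfl⟩ := hy
    simp only [Multiset.mem_toFinset, Polynomial.mem_roots hp0]
    exact (hr i hik).2
  have hcard : ((Finset.range k).image r).card = k := by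
    rw [Finset.card_image_of_injOn hinj, Finset.card_range]
  have h1 : k ≤ p.roots.toFinset.card := hcard ▸ Finset.card_le_card hsub
  have h2 : p.roots.toFinset.card ≤ p.roots.card := Multiset.toFinset_card_le _
  have h3 : p.roots.card ≤ p.natDegree := p.card_roots'
  omega

/-- Weak alternation at k+1 ≥ n+2 points forces p = 0. -/
lemma alt_zero : ∀ (n : ℕ) (p : Polynomial ℝ), p.natDegree ≤ n →
    ∀ (k : ℕ), n + 1 ≤ k → ∀ (x : ℕ → ℝ), (∀ i j, i < j → j ≤ k → x i < x j) →
    ∀ (ε : ℝ), (ε = 1 ∨ ε = -1) →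
    (∀ i, i ≤ k → 0 ≤ ε * (-1:ℝ)^i * p.eval (x i)) → p = 0 := by
  intro n
  induction n with
  | zero =>
    intro p hp k hk x hx ε hε hs
    have hpc : p = Polynomial.C (p.coeff 0) := Polynomial.eq_C_of_natDegree_le_zero hp
    by_cases h0 : p.eval (x 0) = 0
    · rw [hpc] at h0 ⊢
      simpa using h0
    · exfalso
      refine alt_no_strict 0 p hp k hk x hx ε hε hs (fun i _ => ?_)
      rw [hpc] at h0 ⊢
      simpa using (by simpa using h0 : p.coeff 0 ≠ 0)
  | succ m ih =>
    intro p hp k hk x hx ε hε hs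
    by_cases hex : ∃ i, i ≤ k ∧ p.eval (x i) = 0
    · obtain ⟨i, hik, hroot⟩ := hex
      obtain ⟨q, hq⟩ := Polynomial.dvd_iff_isRoot.mpr hroot
      by_cases hq0 : q = 0
      · rw [hq, hq0, mul_zero]
      have hdeg : q.natDegree ≤ m := by
        have hp0 : p ≠ 0 := by
          rw [hq]; exact mul_ne_zero (Polynomial.X_sub_C_ne_zero _) hq0
        have h1 : p.natDegree = 1 + q.natDegree := by
          rw [hq, Polynomial.natDegree_mul (Polynomial.X_sub_C_ne_zero _) hq0,
            Polynomial.natDegree_X_sub_C]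
        omega
      have hpe : ∀ s : ℝ, p.eval s = (s - x i) * q.eval s := by
        intro s; rw [hq]; simp
      set y : ℕ → ℝ := fun mm => if mm < i then x mm else x (mm+1) with hy
      have hxy : ∀ a b, a < b → b ≤ k - 1 → y a < y b := by
        intro a b hab hbk
        by_cases ha : a < i <;> by_cases hb : b < i <;>
          simp only [hy, ha, hb, if_true, if_false, if_pos, if_neg, not_lt] <;>
          first
          | (apply hx <;> omega)
          | omega
      have hsy : ∀ mm, mm ≤ k - 1 → 0 ≤ (-ε) * (-1:ℝ)^mm * q.eval (y mm) := by
        intro mm hmm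
        by_cases hmi : mm < i
        · have hs' := hs mm (by omega)
          rw [hpe] at hs'
          have hneg : x mm - x i < 0 := by
            have := hx mm i hmi (by omega); linarith
          simp only [hy, if_pos hmi]
          by_contra hcon
          push_neg at hcon
          rcases hε with rfl | rfl <;>
            rcases Nat.even_or_odd mm with he | he <;>
            rw [he.neg_one_pow] at hs' hcon <;>
            nlinarith
        · have hs' := hs (mm+1) (by omega)
          rw [hpe, pow_succ] at hs'
          have hpos : 0 < x (mm+1) - x i := by
            have := hx i (mm+1) (by omega) (by omega); linarith
          simp only [hy, if_neg hmi]
          by_contra hcon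
          push_neg at hcon
          rcases hε with rfl | rfl <;>
            rcases Nat.even_or_odd mm with he | he <;>
            rw [he.neg_one_pow] at hs' hcon <;>
            nlinarith
      have hq' : q = 0 := ih q hdeg (k-1) (by omega) y hxy (-ε)
        (by rcases hε with rfl | rfl <;> simp) hsy
      rw [hq, hq', mul_zero]
    · push_neg at hex
      exact absurd (alt_no_strict (m+1) p hp k hk x hx ε hε hs
        (fun i hik => hex i hik)) id

/-- if f - π alternates with full amplitude E = ‖f - π‖ at
k+1 ≥ n+2 points, then π is the unique best approximation: any σ ∈ Π_n
which approximates f at least as well equals π. -/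
theorem alternance_implies_unique_optimal
    (a b E : ℝ) (hab : a < b) (f : ℝ → ℝ)
    (hf : ContinuousOn f (Set.Icc a b))
    (n : ℕ) (π : Polynomial ℝ) (hπ : π.natDegree ≤ n)
    (hE : ∀ t ∈ Set.Icc a b, |f t - π.eval t| ≤ E)
    (ε : ℝ) (hε : ε = 1 ∨ ε = -1)
    (k : ℕ) (hk : n + 1 ≤ k) (t : ℕ → ℝ)
    (ht0 : a ≤ t 0) (htk : t k ≤ b)
    (htmono : ∀ i, i < k → t i < t (i + 1))
    (htin : ∀ i, i ≤ k → t i ∈ Set.Icc a b)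
    (halt : ∀ i, i ≤ k →
      f (t i) - π.eval (t i) = ε * (-1 : ℝ) ^ i * E)
    (σ : Polynomial ℝ) (hσ : σ.natDegree ≤ n)
    (hσopt : ∀ s ∈ Set.Icc a b, |f s - σ.eval s| ≤ E) :
    σ = π := by
  have hdeg : (σ - π).natDegree ≤ n :=
    le_trans (Polynomial.natDegree_sub_le σ π) (max_le hσ hπ)
  have hx := alt_pairwise k t htmono
  have hsign : ∀ i, i ≤ k → 0 ≤ ε * (-1:ℝ)^i * (σ - π).eval (t i) := by
    intro i hik
    have h1 := halt i hik
    have h2 := abs_le.mp (hσopt (t i) (htin i hik))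
    simp only [Polynomial.eval_sub]
    rcases hε with rfl | rfl <;>
      rcases Nat.even_or_odd i with he | he <;>
      rw [he.neg_one_pow] at h1 ⊢ <;>
      nlinarith
  have h0 : σ - π = 0 := alt_zero n (σ - π) hdeg k hk t hx ε hε hsign
  have := sub_eq_zero.mp h0
  exact this
end

section
/- Chebyshev alternance theorem: for continuous f:[a,b]→ℝ, a polynomial π ∈ Π_n is the (unique) minimizer of ‖σ - f‖_∞ over Π_n if and only if there exist ε ∈ {-1,1}, k ≥ n+1, and points a ≤ t₀ < t₁ < ⋯ < t_k ≤ b with f(t_i) - π(t_i) = ε(-1)^i‖f - π‖_∞ for all i. -/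
/-- The uniform distance from f to a polynomial p on [a,b]. -/
noncomputable def chebErr (f : ℝ → ℝ) (a b : ℝ) (p : Polynomial ℝ) : ℝ :=
  sSup ((fun t => |f t - p.eval t|) '' Set.Icc a b)

open Set Polynomial Finset

namespace ChebAux

lemma bddAbove_absImage {a b : ℝ} {g : ℝ → ℝ} (hg : ContinuousOn g (Set.Icc a b)) :
    BddAbove ((fun t => |g t|) '' Set.Icc a b) :=
  (isCompact_Icc.image_of_continuousOn hg.abs).bddAbove

lemma le_supAbs {a b : ℝ} {g : ℝ → ℝ} (hg : ContinuousOn g (Set.Icc a b)) {t : ℝ}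
    (ht : t ∈ Set.Icc a b) : |g t| ≤ sSup ((fun t => |g t|) '' Set.Icc a b) :=
  le_csSup (bddAbove_absImage hg) (Set.mem_image_of_mem _ ht)

lemma supAbs_nonneg {a b : ℝ} (hab : a ≤ b) {g : ℝ → ℝ} (hg : ContinuousOn g (Set.Icc a b)) :
    0 ≤ sSup ((fun t => |g t|) '' Set.Icc a b) :=
  le_trans (abs_nonneg _) (le_supAbs hg (Set.mem_Icc.mpr ⟨le_refl a, hab⟩))

lemma supAbs_attained {a b : ℝ} (hab : a ≤ b) {g : ℝ → ℝ} (hg : ContinuousOn g (Set.Icc a b)) :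
    ∃ t ∈ Set.Icc a b, sSup ((fun t => |g t|) '' Set.Icc a b) = |g t| :=
  isCompact_Icc.exists_sSup_image_eq (Set.nonempty_Icc.mpr hab) hg.abs

lemma mono_of_lt_succ {k : ℕ} {t : ℕ → ℝ} (h : ∀ i, i < k → t i < t (i + 1)) :
    ∀ i j, i ≤ j → j ≤ k → t i ≤ t j := by
  intro i j hij hjk
  induction j with
  | zero => simp_all
  | succ j ih =>
    rcases Nat.lt_or_ge i (j+1) with h1 | h1
    · exact le_trans (ih (Nat.lt_succ_iff.mp h1) (le_trans (Nat.le_succ j) hjk))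
        (le_of_lt (h j (Nat.lt_of_succ_le hjk)))
    · have : i = j + 1 := le_antisymm hij h1
      simp [this]

lemma cheb_continuousOn {a b : ℝ} {f : ℝ → ℝ} (hf : ContinuousOn f (Set.Icc a b))
    (p : Polynomial ℝ) : ContinuousOn (fun t => f t - p.eval t) (Set.Icc a b) :=
  hf.sub p.continuous.continuousOn

/-- the ⇒ direction -/
lemma minimizer_alternant
    (a b : ℝ) (hab : a < b) (f : ℝ → ℝ)
    (hf : ContinuousOn f (Set.Icc a b))
    (n : ℕ) (π : Polynomial ℝ) (hπ : π.natDegree ≤ n)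
    (hmin : ∀ σ : Polynomial ℝ, σ.natDegree ≤ n →
        chebErr f a b π ≤ chebErr f a b σ) :
    ∃ ε : ℝ, (ε = 1 ∨ ε = -1) ∧ ∃ k : ℕ, n + 1 ≤ k ∧ ∃ t : ℕ → ℝ,
        a ≤ t 0 ∧ t k ≤ b ∧ (∀ i, i < k → t i < t (i + 1)) ∧
        ∀ i, i ≤ k →
          f (t i) - π.eval (t i) = ε * (-1 : ℝ) ^ i * chebErr f a b π := by
  classical
  have hrc : ContinuousOn (fun t => f t - π.eval t) (Set.Icc a b) := cheb_continuousOn hf π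
  set r : ℝ → ℝ := fun t => f t - π.eval t with hrdef
  set E := chebErr f a b π with hEdef
  have hrx : ∀ x : ℝ, r x = f x - π.eval x := fun x => rfl
  have hEsup : E = sSup ((fun t => |r t|) '' Set.Icc a b) := rfl
  have hle : ∀ t ∈ Set.Icc a b, |r t| ≤ E := fun t ht => le_supAbs hrc ht
  have hE0 : 0 ≤ E := supAbs_nonneg hab.le hrc
  rcases eq_or_lt_of_le hE0 with hE | hEpos
  · -- degenerate case E = 0
    have hc : 0 < (b - a)/((n:ℝ)+1) := by
      apply div_pos (by linarith) (by positivity)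
    refine ⟨1, Or.inl rfl, n+1, le_refl _,
      fun i => a + (i : ℝ) * ((b - a)/((n:ℝ)+1)), by simp, ?_, ?_, ?_⟩
    · have : ((n:ℝ)+1) ≠ 0 := by positivity
      push_cast
      rw [mul_div_assoc', mul_comm, mul_div_assoc, div_self this, mul_one]
      linarith
    · intro i _
      have : (i:ℝ) < (i:ℝ) + 1 := by linarith
      have := mul_lt_mul_of_pos_right this hc
      push_cast
      linarith
    · intro i hi
      have hmem : a + (i : ℝ) * ((b - a)/((n:ℝ)+1)) ∈ Set.Icc a b := by
        constructor
        · nlinarith [mul_nonneg (Nat.cast_nonneg (α := ℝ) i) hc.le]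
        · have h1 : (i:ℝ) ≤ (n:ℝ)+1 := by
            have := (Nat.cast_le (α := ℝ)).mpr hi; push_cast at this ⊢; linarith
          have h2 : (i:ℝ) * ((b - a)/((n:ℝ)+1)) ≤ ((n:ℝ)+1) * ((b - a)/((n:ℝ)+1)) :=
            mul_le_mul_of_nonneg_right h1 hc.le
          have h3 : ((n:ℝ)+1) * ((b - a)/((n:ℝ)+1)) = b - a := by
            field_simp
          linarith
      have h4 : |r (a + (i : ℝ) * ((b - a)/((n:ℝ)+1)))| ≤ E := hle _ hmem
      rw [← hE] at h4
      have h5 : r (a + (i : ℝ) * ((b - a)/((n:ℝ)+1))) = 0 := by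
        have := abs_nonneg (r (a + (i : ℝ) * ((b - a)/((n:ℝ)+1))))
        have : |r (a + (i : ℝ) * ((b - a)/((n:ℝ)+1)))| = 0 := le_antisymm h4 this
        exact abs_eq_zero.mp this
      rw [← hrx, h5, ← hE]
      ring
  · -- main case E > 0
    by_contra hno
    -- the set of extreme points
    set A : Set ℝ := {t | t ∈ Set.Icc a b ∧ |r t| = E} with hAdef
    have hAclosed : IsClosed A := by
      have h1 := (hrc.abs).preimage_isClosed_of_isClosed isClosed_Icc
        (isClosed_singleton (x := E))
      have h2 : A = Set.Icc a b ∩ (fun t => |r t|) ⁻¹' {E} := by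
        ext t; simp [hAdef]
      rw [h2]; exact h1
    have hAne : A.Nonempty := by
      obtain ⟨t0, ht0, ht0e⟩ := supAbs_attained hab.le hrc
      exact ⟨t0, ht0, ht0e.symm⟩
    have hAbdd : BddBelow A := ⟨a, fun t ht => ht.1.1⟩
    set tmin := sInf A with htmindef
    have htminA : tmin ∈ A := hAclosed.csInf_mem hAne hAbdd
    have htmin_le : ∀ t ∈ A, tmin ≤ t := fun t ht => csInf_le hAbdd ht
    set ε : ℝ := if r tmin = E then 1 else -1 with hεdef
    have hεcases : ε = 1 ∨ ε = -1 := by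
      rw [hεdef]; split_ifs <;> simp
    have hε2 : ε * ε = 1 := by rcases hεcases with h | h <;> rw [h] <;> norm_num
    have hεne : ε ≠ 0 := by rcases hεcases with h | h <;> rw [h] <;> norm_num
    have hrtmin : r tmin = ε * E := by
      rcases abs_eq hE0 |>.mp htminA.2 with h | h
      · rw [hεdef, if_pos h, one_mul]; exact h
      · have hne : r tmin ≠ E := by rw [h]; intro hc; linarith
        rw [hεdef, if_neg hne]; rw [h]; ring
    -- helper: values at consecutive parities differ
    have hne_alt : ∀ (j : ℕ) (x y : ℝ), r x = ε * (-1:ℝ)^j * E → r y = ε * (-1:ℝ)^(j+1) * E →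
        x ≠ y := by
      intro j x y hx hy hxy
      rw [hxy, hy] at hx
      have hpow : (ε * (-1:ℝ)^(j+1)) = -(ε * (-1:ℝ)^j) := by rw [pow_succ]; ring
      have h1 : ε * (-1:ℝ)^j * E = 0 := by nlinarith
      have h2 : ε * (-1:ℝ)^j ≠ 0 := by
        apply mul_ne_zero hεne
        exact pow_ne_zero _ (by norm_num)
      have := mul_eq_zero.mp h1
      rcases this with h | h
      · exact h2 h
      · linarith
    -- the greedy sets and sequence
    set Bs : ℕ → ℝ → Set ℝ :=
      fun j x => {t | t ∈ Set.Icc a b ∧ x ≤ t ∧ r t = ε * (-1:ℝ)^(j+1) * E} with hBsdef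
    have hBsclosed : ∀ j x, IsClosed (Bs j x) := by
      intro j x
      have h1 := hrc.preimage_isClosed_of_isClosed isClosed_Icc
        (isClosed_singleton (x := ε * (-1:ℝ)^(j+1) * E))
      have h2 : Bs j x = (Set.Icc a b ∩ r ⁻¹' {ε * (-1:ℝ)^(j+1) * E}) ∩ Set.Ici x := by
        ext t; simp [hBsdef]; tauto
      rw [h2]
      exact h1.inter isClosed_Ici
    have hBsbdd : ∀ j x, BddBelow (Bs j x) := fun j x => ⟨a, fun t ht => ht.1.1⟩
    set p : ℕ → ℝ := fun j => Nat.rec tmin (fun j pj => sInf (Bs j pj)) j with hpdef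
    have hp0 : p 0 = tmin := rfl
    have hpsucc : ∀ j, p (j+1) = sInf (Bs j (p j)) := fun j => rfl
    -- the chain lemma
    have hchain : ∀ j : ℕ, (∀ i, i < j → (Bs i (p i)).Nonempty) →
        (∀ i, i ≤ j → p i ∈ Set.Icc a b ∧ r (p i) = ε * (-1:ℝ)^i * E) ∧
        (∀ i, i < j → p i < p (i+1)) ∧
        (∀ i, i < j → ∀ t, t ∈ Set.Icc a b → p i ≤ t → t < p (i+1) →
          r t ≠ ε * (-1:ℝ)^(i+1) * E) := by
      intro j
      induction j with
      | zero =>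
        intro _
        refine ⟨?_, by omega, by omega⟩
        intro i hi
        interval_cases i
        rw [hp0]
        exact ⟨htminA.1, by rw [hrtmin]; ring⟩
      | succ j ih =>
        intro hne
        obtain ⟨H1, H2, H3⟩ := ih (fun i hi => hne i (Nat.lt_succ_of_lt hi))
        have hmem : p (j+1) ∈ Bs j (p j) := by
          rw [hpsucc]
          exact (hBsclosed j (p j)).csInf_mem (hne j (Nat.lt_succ_self j)) (hBsbdd j (p j))
        have hlt : p j < p (j+1) := by
          rcases lt_or_eq_of_le hmem.2.1 with h | h
          · exact h
          · exact absurd h (hne_alt j (p j) (p (j+1)) (H1 j le_rfl).2 hmem.2.2)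
        refine ⟨?_, ?_, ?_⟩
        · intro i hi
          rcases Nat.lt_succ_iff_lt_or_eq.mp (Nat.lt_succ_of_le hi) with h | h
          · exact H1 i (Nat.lt_succ_iff.mp h)
          · subst h; exact ⟨hmem.1, hmem.2.2⟩
        · intro i hi
          rcases Nat.lt_succ_iff_lt_or_eq.mp hi with h | h
          · exact H2 i h
          · subst h; exact hlt
        · intro i hi t ht hpt htp hrt
          rcases Nat.lt_succ_iff_lt_or_eq.mp hi with h | h
          · exact H3 i h t ht hpt htp hrt
          · subst h
            have : t ∈ Bs i (p i) := ⟨ht, hpt, hrt⟩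
            have := csInf_le (hBsbdd i (p i)) this
            rw [← hpsucc] at this
            linarith
    -- some Bs must be empty before n+1
    have hex : ∃ i, i ≤ n ∧ Bs i (p i) = ∅ := by
      by_contra hc
      push_neg at hc
      have hne : ∀ i, i < n + 1 → (Bs i (p i)).Nonempty := fun i hi =>
        hc i (Nat.lt_succ_iff.mp hi)
      obtain ⟨H1, H2, _⟩ := hchain (n+1) hne
      exact hno ⟨ε, hεcases, n+1, le_rfl, p, (H1 0 (Nat.zero_le _)).1.1,
        (H1 (n+1) le_rfl).1.2, H2, fun i hi => by
          rw [← hrx]; exact (H1 i hi).2⟩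
    obtain ⟨i0, hi0n, hi0e⟩ := hex
    have hexists : ∃ i, Bs i (p i) = ∅ := ⟨i0, hi0e⟩
    set m := Nat.find hexists with hmdef
    have hm_le : m ≤ n := le_trans (Nat.find_min' hexists hi0e) hi0n
    have hm_empty : Bs m (p m) = ∅ := Nat.find_spec hexists
    have hm_ne : ∀ i, i < m → (Bs i (p i)).Nonempty := fun i hi =>
      Set.nonempty_iff_ne_empty.mpr (Nat.find_min hexists hi)
    obtain ⟨hPicc, hPlt, hPgap⟩ := hchain m hm_ne
    have pmono : ∀ i j, i ≤ j → j ≤ m → p i ≤ p j := mono_of_lt_succ hPlt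
    have hstop : ∀ t, t ∈ Set.Icc a b → p m ≤ t → r t ≠ ε * (-1:ℝ)^(m+1) * E := by
      intro t ht hpt hrt
      have : t ∈ Bs m (p m) := ⟨ht, hpt, hrt⟩
      rw [hm_empty] at this
      exact this
    -- dichotomy for extreme values
    have hdichot : ∀ (j : ℕ) (t : ℝ), |r t| = E →
        r t = ε * (-1:ℝ)^j * E ∨ r t = ε * (-1:ℝ)^(j+1) * E := by
      intro j t h
      have h2 : r t = E ∨ r t = -E := (abs_eq hE0).mp h
      have hsj : ε * (-1:ℝ)^j = 1 ∨ ε * (-1:ℝ)^j = -1 := by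
        rcases hεcases with h1 | h1 <;> rcases Nat.even_or_odd j with hp | hp <;>
          simp [h1, hp.neg_one_pow]
      have hpow : ε * (-1:ℝ)^(j+1) = -(ε * (-1:ℝ)^j) := by rw [pow_succ]; ring
      rcases hsj with h1 | h1 <;> rcases h2 with h2 | h2
      · left; rw [h1, one_mul]; exact h2
      · right; rw [hpow, h1]; rw [h2]; ring
      · right; rw [hpow, h1]; rw [h2]; ring
      · left; rw [h1]; rw [h2]; ring
    -- rightmost same-sign points and separators
    set Qs : ℕ → Set ℝ := fun j => {t | t ∈ Set.Icc a b ∧ p j ≤ t ∧ t ≤ p (j+1) ∧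
      r t = ε * (-1:ℝ)^j * E} with hQsdef
    have hQsclosed : ∀ j, IsClosed (Qs j) := by
      intro j
      have h1 := hrc.preimage_isClosed_of_isClosed isClosed_Icc
        (isClosed_singleton (x := ε * (-1:ℝ)^j * E))
      have h2 : Qs j = (Set.Icc a b ∩ r ⁻¹' {ε * (-1:ℝ)^j * E}) ∩ Set.Icc (p j) (p (j+1)) := by
        ext t; simp [hQsdef]; tauto
      rw [h2]
      exact h1.inter isClosed_Icc
    have hQsbdd : ∀ j, BddAbove (Qs j) := fun j => ⟨b, fun t ht => ht.1.2⟩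
    have hQsne : ∀ j, j < m → (Qs j).Nonempty := by
      intro j hj
      exact ⟨p j, (hPicc j hj.le).1, le_rfl, (hPlt j hj).le, (hPicc j hj.le).2⟩
    set q : ℕ → ℝ := fun j => sSup (Qs j) with hqdef
    have hq_mem : ∀ j, j < m → q j ∈ Qs j := fun j hj =>
      (hQsclosed j).csSup_mem (hQsne j hj) (hQsbdd j)
    have hq_ub : ∀ j, j < m → ∀ t ∈ Qs j, t ≤ q j := fun j hj t ht =>
      le_csSup (hQsbdd j) ht
    have hq_lt : ∀ j, j < m → q j < p (j+1) := by
      intro j hj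
      rcases lt_or_eq_of_le (hq_mem j hj).2.2.1 with h | h
      · exact h
      · exact absurd h (hne_alt j (q j) (p (j+1)) (hq_mem j hj).2.2.2 (hPicc (j+1) hj).2)
    set z : ℕ → ℝ := fun j => (q j + p (j+1))/2 with hzdef
    have hz1 : ∀ j, j < m → q j < z j := by
      intro j hj; rw [hzdef]; have := hq_lt j hj; dsimp only; linarith
    have hz2 : ∀ j, j < m → z j < p (j+1) := by
      intro j hj; rw [hzdef]; have := hq_lt j hj; dsimp only; linarith
    -- classification of extreme points
    have hclass : ∀ t, t ∈ Set.Icc a b → |r t| = E → ∃ l, l ≤ m ∧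
        r t = ε * (-1:ℝ)^l * E ∧
        ∀ j, j < m → ((j < l → z j < t) ∧ (l ≤ j → t < z j)) := by
      intro t ht hext
      have hp0t : p 0 ≤ t := by rw [hp0]; exact htmin_le t ⟨ht, hext⟩
      by_cases hpm : p m ≤ t
      · refine ⟨m, le_rfl, ?_, ?_⟩
        · rcases hdichot m t hext with h | h
          · exact h
          · exact absurd h (hstop t ht hpm)
        · intro j hj
          refine ⟨fun _ => ?_, fun h => absurd hj (not_lt.mpr h)⟩
          calc z j < p (j+1) := hz2 j hj
            _ ≤ p m := pmono (j+1) m hj le_rfl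
            _ ≤ t := hpm
      · push_neg at hpm
        have hm0 : 0 < m := by
          by_contra hm0
          push_neg at hm0
          interval_cases m
          exact absurd hp0t (not_le.mpr hpm)
        have hm1 : m - 1 + 1 = m := by omega
        have hfind : ∃ j, t < p (j+1) := ⟨m-1, by rw [hm1]; exact hpm⟩
        set l := Nat.find hfind with hldef
        have htl : t < p (l+1) := Nat.find_spec hfind
        have hlm : l < m := by
          have h1 : l ≤ m - 1 := Nat.find_min' hfind (by rw [hm1]; exact hpm)
          omega
        have hpl : p l ≤ t := by
          rcases Nat.eq_zero_or_pos l with h | h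
          · rw [h]; exact hp0t
          · have := Nat.find_min hfind (m := l - 1) (by omega)
            push_neg at this
            have h2 : l - 1 + 1 = l := by omega
            rwa [h2] at this
        have hrt : r t = ε * (-1:ℝ)^l * E := by
          rcases hdichot l t hext with h | h
          · exact h
          · exact absurd h (hPgap l hlm t ht hpl htl)
        have htq : t ≤ q l := hq_ub l hlm t ⟨ht, hpl, htl.le, hrt⟩
        refine ⟨l, hlm.le, hrt, ?_⟩
        intro j hj
        constructor
        · intro hjl
          calc z j < p (j+1) := hz2 j hj
            _ ≤ p l := pmono (j+1) l hjl hlm.le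
            _ ≤ t := hpl
        · intro hlj
          rcases lt_or_eq_of_le hlj with h | h
          · calc t < p (l+1) := htl
              _ ≤ p j := pmono (l+1) j h hj.le
              _ ≤ q j := (hq_mem j hj).2.1
              _ < z j := hz1 j hj
          · rw [← h]
            exact lt_of_le_of_lt htq (hz1 l (h ▸ hj))
    -- the sign polynomial
    set Q : Polynomial ℝ := C ε * ∏ j ∈ Finset.range m, (C (z j) - X) with hQdef
    have hQdeg : Q.natDegree ≤ n := by
      refine le_trans natDegree_mul_le ?_
      rw [natDegree_C, zero_add]
      refine le_trans (natDegree_prod_le _ _) (le_trans ?_ hm_le)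
      calc ∑ j ∈ Finset.range m, (C (z j) - X).natDegree
          ≤ ∑ _j ∈ Finset.range m, 1 := by
            apply Finset.sum_le_sum
            intro j _
            have : C (z j) - X = -(X - C (z j)) := by ring
            rw [this, natDegree_neg, natDegree_X_sub_C]
        _ = m := by simp
    have hQeval : ∀ x : ℝ, Q.eval x = ε * ∏ j ∈ Finset.range m, (z j - x) := by
      intro x
      rw [hQdef]
      simp [eval_prod]
    have hQsign : ∀ t, t ∈ Set.Icc a b → |r t| = E → 0 < r t * Q.eval t := by
      intro t ht hext
      obtain ⟨l, hlm, hrt, hsep⟩ := hclass t ht hext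
      rw [hQeval, hrt]
      have hsplit : ∏ j ∈ Finset.range m, (z j - t) =
          (∏ j ∈ Finset.range l, (z j - t)) * ∏ j ∈ Finset.Ico l m, (z j - t) :=
        (Finset.prod_range_mul_prod_Ico _ hlm).symm
      have hneg : ∏ j ∈ Finset.range l, (z j - t) =
          (-1:ℝ)^l * ∏ j ∈ Finset.range l, (t - z j) := by
        calc ∏ j ∈ Finset.range l, (z j - t)
            = ∏ j ∈ Finset.range l, ((-1) * (t - z j)) := by
              apply Finset.prod_congr rfl; intro j _; ring
          _ = (∏ _j ∈ Finset.range l, (-1:ℝ)) * ∏ j ∈ Finset.range l, (t - z j) :=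
              Finset.prod_mul_distrib
          _ = (-1:ℝ)^l * ∏ j ∈ Finset.range l, (t - z j) := by
              rw [Finset.prod_const, Finset.card_range]
      have hP1 : 0 < ∏ j ∈ Finset.range l, (t - z j) := by
        apply Finset.prod_pos
        intro j hj
        have hjl := Finset.mem_range.mp hj
        exact sub_pos.mpr ((hsep j (lt_of_lt_of_le hjl hlm)).1 hjl)
      have hP2 : 0 < ∏ j ∈ Finset.Ico l m, (z j - t) := by
        apply Finset.prod_pos
        intro j hj
        obtain ⟨h1, h2⟩ := Finset.mem_Ico.mp hj
        exact sub_pos.mpr ((hsep j h2).2 h1)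
      rw [hsplit, hneg]
      have hpow2 : (-1:ℝ)^l * (-1:ℝ)^l = 1 := by rw [← mul_pow]; norm_num
      have hkey : ε * (-1:ℝ)^l * E *
          (ε * ((-1:ℝ)^l * (∏ j ∈ Finset.range l, (t - z j)) *
            ∏ j ∈ Finset.Ico l m, (z j - t))) =
          E * ((∏ j ∈ Finset.range l, (t - z j)) * ∏ j ∈ Finset.Ico l m, (z j - t)) := by
        calc ε * (-1:ℝ)^l * E *
            (ε * ((-1:ℝ)^l * (∏ j ∈ Finset.range l, (t - z j)) *
              ∏ j ∈ Finset.Ico l m, (z j - t)))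
            = (ε * ε) * ((-1:ℝ)^l * (-1:ℝ)^l) *
              (E * ((∏ j ∈ Finset.range l, (t - z j)) *
                ∏ j ∈ Finset.Ico l m, (z j - t))) := by ring
          _ = _ := by rw [hε2, hpow2]; ring
      rw [hkey]
      exact mul_pos hEpos (mul_pos hP1 hP2)
    -- the bad set and perturbation
    set K : Set ℝ := {t | t ∈ Set.Icc a b ∧ r t * Q.eval t ≤ 0} with hKdef
    have hKclosed : IsClosed K := by
      have h1 := (hrc.mul Q.continuous.continuousOn).preimage_isClosed_of_isClosed
        isClosed_Icc (isClosed_Iic (a := (0:ℝ)))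
      have h2 : K = Set.Icc a b ∩ (fun t => r t * Q.eval t) ⁻¹' Set.Iic 0 := by
        ext t; simp [hKdef]
      rw [h2]; exact h1
    have hKsub : K ⊆ Set.Icc a b := fun t ht => ht.1
    have hKcomp : IsCompact K := isCompact_Icc.of_isClosed_subset hKclosed hKsub
    have hKlt : ∀ t ∈ K, |r t| < E := by
      intro t ht
      refine lt_of_le_of_ne (hle t ht.1) (fun h => ?_)
      exact absurd (hQsign t ht.1 h) (not_lt.mpr ht.2)
    set E' := sSup ((fun t => |r t|) '' K) with hE'def
    have hE'prop : E' < E ∧ ∀ t ∈ K, |r t| ≤ E' := by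
      rcases Set.eq_empty_or_nonempty K with hKe | hKne
      · constructor
        · rw [hE'def, hKe, Set.image_empty, Real.sSup_empty]; exact hEpos
        · intro t ht; rw [hKe] at ht; exact absurd ht (Set.notMem_empty t)
      · have hrcK : ContinuousOn (fun t => |r t|) K := (hrc.mono hKsub).abs
        obtain ⟨t0, ht0K, ht0⟩ := hKcomp.exists_sSup_image_eq hKne hrcK
        constructor
        · rw [hE'def, ht0]; exact hKlt t0 ht0K
        · intro t ht
          exact le_csSup (hKcomp.image_of_continuousOn hrcK).bddAbove
            (Set.mem_image_of_mem _ ht)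
    set M := sSup ((fun t => |Q.eval t|) '' Set.Icc a b) with hMdef
    have hQcOn : ContinuousOn (fun t : ℝ => Q.eval t) (Set.Icc a b) :=
      Q.continuous.continuousOn
    have hM : ∀ t ∈ Set.Icc a b, |Q.eval t| ≤ M := fun t ht => le_supAbs hQcOn ht
    have hM0 : 0 ≤ M := supAbs_nonneg hab.le hQcOn
    set lam := min ((E - E')/2) (E/2) / (M+1) with hlamdef
    have hminpos : 0 < min ((E - E')/2) (E/2) := lt_min (by linarith [hE'prop.1]) (by linarith)
    have hlam_pos : 0 < lam := div_pos hminpos (by linarith)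
    have hlamM : ∀ t ∈ Set.Icc a b, lam * |Q.eval t| ≤ min ((E - E')/2) (E/2) := by
      intro t ht
      have h1 : lam * |Q.eval t| ≤ lam * M :=
        mul_le_mul_of_nonneg_left (hM t ht) hlam_pos.le
      have h2 : lam * M ≤ min ((E - E')/2) (E/2) := by
        rw [hlamdef, div_mul_eq_mul_div, div_le_iff₀ (by linarith : (0:ℝ) < M + 1)]
        nlinarith [hminpos]
      linarith
    set σp : Polynomial ℝ := π + C lam * Q with hσpdef
    have hσpdeg : σp.natDegree ≤ n := by
      refine le_trans (natDegree_add_le _ _) (max_le hπ ?_)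
      refine le_trans natDegree_mul_le ?_
      rw [natDegree_C, zero_add]
      exact hQdeg
    have hσpeval : ∀ x : ℝ, f x - σp.eval x = r x - lam * Q.eval x := by
      intro x
      rw [hσpdef, hrx]
      simp only [eval_add, eval_mul, eval_C]
      ring
    have hσpc : ContinuousOn (fun t => f t - σp.eval t) (Set.Icc a b) :=
      cheb_continuousOn hf σp
    obtain ⟨ts, htsmem, hts⟩ := supAbs_attained hab.le hσpc
    have hval : |f ts - σp.eval ts| < E := by
      rw [hσpeval]
      have hlam' : lam * |Q.eval ts| ≤ E/2 :=
        le_trans (hlamM ts htsmem) (min_le_right _ _)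
      by_cases hK : ts ∈ K
      · have h1 : |r ts| ≤ E' := hE'prop.2 ts hK
        have h2 : lam * |Q.eval ts| ≤ (E - E')/2 :=
          le_trans (hlamM ts htsmem) (min_le_left _ _)
        have h3 : |r ts - lam * Q.eval ts| ≤ |r ts| + |lam * Q.eval ts| := by
          rw [sub_eq_add_neg]
          refine le_trans (abs_add_le _ _) ?_
          rw [abs_neg]
        rw [abs_mul, abs_of_pos hlam_pos] at h3
        have := hE'prop.1
        linarith
      · have hKpos : 0 < r ts * Q.eval ts := by
          by_contra hc
          push_neg at hc
          exact hK ⟨htsmem, hc⟩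
        have hra := abs_le.mp (hle ts htsmem)
        rw [abs_lt]
        rcases mul_pos_iff.mp hKpos with ⟨h1, h2⟩ | ⟨h1, h2⟩
        · have hq : lam * Q.eval ts ≤ E/2 := by
            rw [abs_of_pos h2] at hlam'
            exact hlam'
          have hqpos : 0 < lam * Q.eval ts := mul_pos hlam_pos h2
          constructor <;> linarith [hra.1, hra.2]
        · have hq : -(lam * Q.eval ts) ≤ E/2 := by
            rw [abs_of_neg h2] at hlam'
            rw [mul_neg] at hlam'
            linarith [hlam']
          have hqneg : lam * Q.eval ts < 0 :=
            mul_neg_of_pos_of_neg hlam_pos h2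
          constructor <;> linarith [hra.1, hra.2]
    have hfinal : chebErr f a b σp < E := by
      have hcheb : chebErr f a b σp = |f ts - σp.eval ts| := hts
      rw [hcheb]
      exact hval
    exact absurd (hmin σp hσpdeg) (not_le.mpr hfinal)
/-- the ⇐ direction -/
lemma alternant_minimizer
    (a b : ℝ) (hab : a < b) (f : ℝ → ℝ)
    (hf : ContinuousOn f (Set.Icc a b))
    (n : ℕ) (π : Polynomial ℝ) (hπ : π.natDegree ≤ n)
    (ε : ℝ) (hε : ε = 1 ∨ ε = -1) (k : ℕ) (hk : n + 1 ≤ k) (t : ℕ → ℝ)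
    (ht0 : a ≤ t 0) (htk : t k ≤ b) (htmono : ∀ i, i < k → t i < t (i + 1))
    (halt : ∀ i, i ≤ k →
      f (t i) - π.eval (t i) = ε * (-1 : ℝ) ^ i * chebErr f a b π) :
    ∀ σ : Polynomial ℝ, σ.natDegree ≤ n → chebErr f a b π ≤ chebErr f a b σ := by
  intro σ hσ
  by_contra hlt
  push_neg at hlt
  set E := chebErr f a b π with hE
  have hσc := cheb_continuousOn hf σ
  have hεabs : |ε| = 1 := by rcases hε with h | h <;> simp [h]
  have hε2 : ε * ε = 1 := by rcases hε with h | h <;> rw [h] <;> norm_num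
  have hσ0 : 0 ≤ chebErr f a b σ := supAbs_nonneg (le_of_lt hab) hσc
  have hEpos : 0 < E := lt_of_le_of_lt hσ0 hlt
  have htmem : ∀ i, i ≤ k → t i ∈ Icc a b := by
    intro i hi
    exact ⟨le_trans ht0 (mono_of_lt_succ htmono 0 i (Nat.zero_le _) hi),
      le_trans (mono_of_lt_succ htmono i k hi (le_refl k)) htk⟩
  set d := σ - π with hd
  have hdeval : ∀ x : ℝ, d.eval x = (f x - π.eval x) - (f x - σ.eval x) := by
    intro x; simp only [hd, eval_sub]; ring
  -- sign of d at alternation points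
  have hsign : ∀ i, i ≤ k → 0 < ε * (-1 : ℝ) ^ i * d.eval (t i) := by
    intro i hi
    have h1 : |f (t i) - σ.eval (t i)| ≤ chebErr f a b σ := le_supAbs hσc (htmem i hi)
    have h2 : ε * (-1:ℝ)^i * d.eval (t i)
        = E - ε * (-1:ℝ)^i * (f (t i) - σ.eval (t i)) := by
      rw [hdeval, mul_sub, halt i hi]
      have : (-1:ℝ)^i * (-1:ℝ)^i = 1 := by
        rw [← mul_pow]; norm_num
      calc ε * (-1:ℝ)^i * (ε * (-1:ℝ)^i * E) - ε * (-1:ℝ)^i * (f (t i) - σ.eval (t i))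
          = (ε*ε) * ((-1:ℝ)^i * (-1:ℝ)^i) * E - ε * (-1:ℝ)^i * (f (t i) - σ.eval (t i)) := by ring
        _ = E - ε * (-1:ℝ)^i * (f (t i) - σ.eval (t i)) := by rw [hε2, this]; ring
    rw [h2]
    have h3 : |ε * (-1:ℝ)^i * (f (t i) - σ.eval (t i))| ≤ chebErr f a b σ := by
      rw [abs_mul, abs_mul, hεabs, abs_pow, abs_neg, abs_one, one_pow]
      simpa using h1
    have := abs_le.mp h3
    linarith [this.2]
  -- roots between alternation points
  have hroots : ∀ i, i < k → ∃ x, x ∈ Ioo (t i) (t (i+1)) ∧ d.eval x = 0 := by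
    intro i hi
    have hle : t i ≤ t (i+1) := le_of_lt (htmono i hi)
    have hdc : ContinuousOn (fun x => d.eval x) (Icc (t i) (t (i+1))) :=
      d.continuous.continuousOn
    have hu := hsign i (le_of_lt hi)
    have hv := hsign (i+1) hi
    have hv' : ε * (-1:ℝ)^i * d.eval (t (i+1)) < 0 := by
      have : ε * (-1:ℝ)^(i+1) = -(ε * (-1:ℝ)^i) := by ring
      rw [this] at hv; linarith
    have hs : ε * (-1:ℝ)^i = 1 ∨ ε * (-1:ℝ)^i = -1 := by
      rcases hε with h | h <;> rcases Nat.even_or_odd i with hp | hp <;>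
        simp [h, hp.neg_one_pow]
    rcases hs with hs | hs
    · have hu' : 0 < d.eval (t i) := by rw [hs, one_mul] at hu; exact hu
      have hv'' : d.eval (t (i+1)) < 0 := by rw [hs, one_mul] at hv'; exact hv'
      obtain ⟨x, hx1, hx2⟩ := intermediate_value_Ioo' hle hdc ⟨hv'', hu'⟩
      exact ⟨x, hx1, hx2⟩
    · have hu' : d.eval (t i) < 0 := by rw [hs] at hu; linarith
      have hv'' : 0 < d.eval (t (i+1)) := by rw [hs] at hv'; linarith
      obtain ⟨x, hx1, hx2⟩ := intermediate_value_Ioo hle hdc ⟨hu', hv''⟩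
      exact ⟨x, hx1, hx2⟩
  choose x hx1 hx2 using hroots
  -- d = 0
  have hdz : d = 0 := by
    have hcard : d.natDegree < Fintype.card (Fin (n+1)) := by
      simp only [Fintype.card_fin]
      exact Nat.lt_succ_of_le (le_trans (natDegree_sub_le σ π) (max_le hσ hπ))
    refine Polynomial.eq_zero_of_natDegree_lt_card_of_eval_eq_zero d
      (f := fun i : Fin (n+1) => x i.val (lt_of_lt_of_le i.isLt hk)) ?_ ?_ hcard
    · intro i j hij
      by_contra hne
      have key : ∀ p q : Fin (n+1), p < q →
          x p.val (lt_of_lt_of_le p.isLt hk) < x q.val (lt_of_lt_of_le q.isLt hk) := by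
        intro p q hpq
        have h1 := (hx1 p.val (lt_of_lt_of_le p.isLt hk)).2
        have h2 := (hx1 q.val (lt_of_lt_of_le q.isLt hk)).1
        have h3 : t (p.val + 1) ≤ t q.val :=
          mono_of_lt_succ htmono (p.val+1) q.val hpq (le_of_lt (lt_of_lt_of_le q.isLt hk))
        linarith
      rcases lt_trichotomy i j with h | h | h
      · exact absurd hij (ne_of_lt (key i j h))
      · exact hne h
      · exact absurd hij.symm (ne_of_lt (key j i h))
    · intro i; exact hx2 i.val (lt_of_lt_of_le i.isLt hk)
  have := hsign 0 (Nat.zero_le k)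
  rw [hdz] at this
  simp at this
end ChebAux

/-- the Chebyshev alternance theorem: π ∈ Π_n is a minimizer of
‖σ - f‖_∞ over Π_n if and only if f - π equioscillates at k+1 ≥ n+2 points. -/
theorem chebyshev_alternance
    (a b : ℝ) (hab : a < b) (f : ℝ → ℝ)
    (hf : ContinuousOn f (Set.Icc a b))
    (n : ℕ) (π : Polynomial ℝ) (hπ : π.natDegree ≤ n) :
    (∀ σ : Polynomial ℝ, σ.natDegree ≤ n →
        chebErr f a b π ≤ chebErr f a b σ) ↔
      ∃ ε : ℝ, (ε = 1 ∨ ε = -1) ∧ ∃ k : ℕ, n + 1 ≤ k ∧ ∃ t : ℕ → ℝ,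
        a ≤ t 0 ∧ t k ≤ b ∧ (∀ i, i < k → t i < t (i + 1)) ∧
        ∀ i, i ≤ k →
          f (t i) - π.eval (t i) = ε * (-1 : ℝ) ^ i * chebErr f a b π := by
  constructor
  · exact ChebAux.minimizer_alternant a b hab f hf n π hπ
  · rintro ⟨ε, hε, k, hk, t, ht0, htk, htmono, halt⟩
    exact ChebAux.alternant_minimizer a b hab f hf n π hπ ε hε k hk t ht0 htk htmono halt
end

section
/- With Γ_k(r) defined as the infimum of ∏_{i=0}^{k-1}|t-ξ_i| over t ∈ [a,b] and points a+r ≤ ξ₀ ≤ ⋯ ≤ ξ_{k-1} ≤ b-r satisfying ξ_{i+1}-ξ_i ≥ 2r and |t-ξ_i| ≥ r, one has Γ₃(r) = 3r³, attained at ξ₀ = a+r, ξ₁ = ξ₀+2r, ξ₂ = ξ₁+2r, t = (ξ₀+ξ₁)/2. -/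
/-- Γ₃(r) = 3r³: the minimal value of |t-ξ₀||t-ξ₁||t-ξ₂| over
t ∈ [a,b] and a+r ≤ ξ₀ ≤ ξ₁ ≤ ξ₂ ≤ b-r with consecutive gaps ≥ 2r and
|t-ξ_i| ≥ r, is 3r³, attained at ξ₀ = a+r, ξ₁ = ξ₀+2r, ξ₂ = ξ₁+2r,
t = (ξ₀+ξ₁)/2. -/
theorem Gamma_three (a b r : ℝ) (hr : 0 < r) (hab : a + 6 * r ≤ b) :
    IsLeast
      {v : ℝ | ∃ t ξ₀ ξ₁ ξ₂ : ℝ, t ∈ Set.Icc a b ∧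
        a + r ≤ ξ₀ ∧ ξ₀ ≤ ξ₁ ∧ ξ₁ ≤ ξ₂ ∧ ξ₂ ≤ b - r ∧
        2 * r ≤ ξ₁ - ξ₀ ∧ 2 * r ≤ ξ₂ - ξ₁ ∧
        r ≤ |t - ξ₀| ∧ r ≤ |t - ξ₁| ∧ r ≤ |t - ξ₂| ∧
        v = |t - ξ₀| * |t - ξ₁| * |t - ξ₂|}
      (3 * r ^ 3) := by
  constructor
  · refine ⟨a + 2*r, a + r, a + 3*r, a + 5*r, ⟨by linarith, by linarith⟩,
      le_refl _, by linarith, by linarith, by linarith, by linarith, by linarith,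
      ?_, ?_, ?_, ?_⟩
    · rw [show a + 2*r - (a + r) = r by ring, abs_of_pos hr]
    · rw [show a + 2*r - (a + 3*r) = -r by ring, abs_neg, abs_of_pos hr]
    · rw [show a + 2*r - (a + 5*r) = -(3*r) by ring, abs_neg,
        abs_of_pos (by linarith : (0:ℝ) < 3*r)]
      linarith
    · rw [show a + 2*r - (a + r) = r by ring,
        show a + 2*r - (a + 3*r) = -r by ring,
        show a + 2*r - (a + 5*r) = -(3*r) by ring, abs_neg, abs_neg,
        abs_of_pos hr, abs_of_pos (by linarith : (0:ℝ) < 3*r)]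
      ring
  · rintro v ⟨t, ξ₀, ξ₁, ξ₂, ht, h0, h01, h12, h2, g01, g12, d0, d1, d2, rfl⟩
    have h4 : 4 * r ≤ |t - ξ₀| + |t - ξ₂| := by
      calc 4 * r ≤ ξ₂ - ξ₀ := by linarith
        _ = |ξ₂ - ξ₀| := (abs_of_nonneg (by linarith)).symm
        _ = |(t - ξ₀) - (t - ξ₂)| := by ring_nf
        _ ≤ |t - ξ₀| + |t - ξ₂| := abs_sub _ _
    have key : 3 * r^2 ≤ |t - ξ₀| * |t - ξ₂| := by
      nlinarith [mul_nonneg (by linarith : (0:ℝ) ≤ |t - ξ₀| - r)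
        (by linarith : (0:ℝ) ≤ |t - ξ₂| - r)]
    nlinarith [abs_nonneg (t - ξ₀), abs_nonneg (t - ξ₂)]
end

section
/- Let Σ be the space of continuous splines on [a,b] with knots a = x₀ < ⋯ < x_{p+1} = b and degrees n₀,…,n_p, and let ξ₁ < ξ₂ < ⋯ < ξ_q be points in [a,b] with q ≥ n₀ + n₁ + ⋯ + n_p + 2. Then there is no δ ∈ Σ such that δ(ξ_i)·δ(ξ_{i+1}) < 0 for all i = 1,…,q-1. -/
open Set Finset

lemma glue_Icc {f : ℝ → ℝ} {c d e : ℝ} (h1 : c ≤ d) (h2 : d ≤ e)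
    (hf1 : ContinuousOn f (Set.Icc c d)) (hf2 : ContinuousOn f (Set.Icc d e)) :
    ContinuousOn f (Set.Icc c e) := by
  rw [← Set.Icc_union_Icc_eq_Icc h1 h2]
  intro y hy
  rcases hy with hy | hy
  · exact (hf1 y hy).union (by
      by_cases h : y ∈ Set.Icc d e
      · exact hf2 y h
      · exact continuousWithinAt_of_notMem_closure (by
          rwa [isClosed_Icc.closure_eq]))
  · refine ContinuousWithinAt.union ?_ (hf2 y hy)
    by_cases h : y ∈ Set.Icc c d
    · exact hf1 y h
    · exact continuousWithinAt_of_notMem_closure (by rwa [isClosed_Icc.closure_eq])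

lemma exists_piece (x : ℕ → ℝ) :
    ∀ (k : ℕ) (t : ℝ), t ∈ Set.Icc (x 0) (x (k + 1)) →
      ∃ i, i ≤ k ∧ t ∈ Set.Icc (x i) (x (i + 1)) := by
  intro k
  induction k with
  | zero => exact fun t ht => ⟨0, le_rfl, ht⟩
  | succ m ih =>
    intro t ht
    rcases le_or_gt t (x (m + 1)) with h | h
    · obtain ⟨i, hi, hmem⟩ := ih t ⟨ht.1, h⟩
      exact ⟨i, by omega, hmem⟩
    · exact ⟨m + 1, le_rfl, ⟨le_of_lt h, ht.2⟩⟩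

/-- σ is a continuous spline on [x 0, x (p+1)] with knots x 0 < ⋯ < x (p+1)
and degree ≤ n i on each piece [x i, x (i+1)]. -/
def IsSpline (p : ℕ) (x : ℕ → ℝ) (n : ℕ → ℕ) (σ : ℝ → ℝ) : Prop :=
  ∃ P : ℕ → Polynomial ℝ,
    (∀ i, i ≤ p → (P i).natDegree ≤ n i) ∧
    ∀ i, i ≤ p → ∀ t ∈ Set.Icc (x i) (x (i + 1)), σ t = (P i).eval t

/-- a spline with piecewise degrees n₀,…,n_p cannot alternate in
sign at q ≥ n₀ + ⋯ + n_p + 2 points of [a,b]. -/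
theorem no_spline_sign_alternation
    (a b : ℝ) (hab : a < b)
    (p : ℕ) (x : ℕ → ℝ) (n : ℕ → ℕ)
    (hx0 : x 0 = a) (hxp : x (p + 1) = b)
    (hxmono : ∀ i, i ≤ p → x i < x (i + 1))
    (hn : ∀ i, i ≤ p → 1 ≤ n i)
    (q : ℕ) (hq : (∑ i ∈ Finset.range (p + 1), n i) + 2 ≤ q)
    (ξ : ℕ → ℝ)
    (hξin : ∀ i, i < q → ξ i ∈ Set.Icc a b)
    (hξmono : ∀ i, i + 1 < q → ξ i < ξ (i + 1))
    (δ : ℝ → ℝ) (hδ : IsSpline p x n δ)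
    (hsign : ∀ i, i + 1 < q → δ (ξ i) * δ (ξ (i + 1)) < 0) :
    False := by
  obtain ⟨P, hdeg, hval⟩ := hδ
  have hxle : ∀ i j, i ≤ j → j ≤ p + 1 → x i ≤ x j := by
    intro i j hij hjp
    induction j with
    | zero => simp_all
    | succ k ih =>
      rcases Nat.lt_or_ge i (k + 1) with h | h
      · exact le_trans (ih (Nat.lt_succ_iff.mp h) (by omega))
          (le_of_lt (hxmono k (by omega)))
      · have : i = k + 1 := by omega
        simp [this]
  have hξle : ∀ i j, i ≤ j → j < q → ξ i ≤ ξ j := by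
    intro i j hij hjq
    induction j with
    | zero => simp_all
    | succ k ih =>
      rcases Nat.lt_or_ge i (k + 1) with h | h
      · exact le_trans (ih (Nat.lt_succ_iff.mp h) (by omega))
          (le_of_lt (hξmono k hjq))
      · have : i = k + 1 := by omega
        simp [this]
  have hcont : ∀ k, k ≤ p → ContinuousOn δ (Set.Icc (x 0) (x (k + 1))) := by
    intro k hk
    induction k with
    | zero =>
      exact ((P 0).continuous_aeval.continuousOn).congr
        (fun t ht => hval 0 (Nat.zero_le p) t ht)
    | succ m ih =>
      refine glue_Icc (hxle 0 (m + 1) (by omega) (by omega))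
        (le_of_lt (hxmono (m + 1) hk)) (ih (by omega)) ?_
      exact ((P (m + 1)).continuous_aeval.continuousOn).congr
        (fun t ht => hval (m + 1) hk t ht)
  have hcontab : ContinuousOn δ (Set.Icc a b) := by
    rw [← hx0, ← hxp]; exact hcont p le_rfl
  have hξne : ∀ i, i < q → δ (ξ i) ≠ 0 := by
    intro i hi h0
    rcases Nat.lt_or_ge (i + 1) q with h | h
    · have := hsign i h
      rw [h0, zero_mul] at this; exact lt_irrefl 0 this
    · have := hsign (i - 1) (by omega)
      rw [show i - 1 + 1 = i by omega, h0, mul_zero] at this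
      exact lt_irrefl 0 this
  -- zeros between consecutive ξ's (totalized)
  have hzero : ∀ j, ∃ zj, j + 1 < q → zj ∈ Set.Ioo (ξ j) (ξ (j + 1)) ∧ δ zj = 0 := by
    intro j
    by_cases hj : j + 1 < q
    · have hsub : Set.Icc (ξ j) (ξ (j + 1)) ⊆ Set.Icc a b :=
        Set.Icc_subset_Icc (hξin j (by omega)).1 (hξin (j + 1) hj).2
      have hcon : ContinuousOn δ (Set.Icc (ξ j) (ξ (j + 1))) := hcontab.mono hsub
      have hle : ξ j ≤ ξ (j + 1) := le_of_lt (hξmono j hj)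
      rcases mul_neg_iff.mp (hsign j hj) with ⟨hpos, hneg⟩ | ⟨hneg, hpos⟩
      · obtain ⟨zj, hz, hz0⟩ := intermediate_value_Ioo' hle hcon ⟨hneg, hpos⟩
        exact ⟨zj, fun _ => ⟨hz, hz0⟩⟩
      · obtain ⟨zj, hz, hz0⟩ := intermediate_value_Ioo hle hcon ⟨hneg, hpos⟩
        exact ⟨zj, fun _ => ⟨hz, hz0⟩⟩
    · exact ⟨0, fun h => absurd h hj⟩
  choose z hz using hzero
  have hzmem : ∀ j, j + 1 < q → z j ∈ Set.Ioo (ξ j) (ξ (j + 1)) := fun j hj => (hz j hj).1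
  have hz0 : ∀ j, j + 1 < q → δ (z j) = 0 := fun j hj => (hz j hj).2
  have hzin : ∀ j, j + 1 < q → z j ∈ Set.Icc a b := by
    intro j hj
    exact ⟨le_trans (hξin j (by omega)).1 (le_of_lt (hzmem j hj).1),
      le_trans (le_of_lt (hzmem j hj).2) (hξin (j + 1) hj).2⟩
  -- strict monotonicity of the zeros
  have hzlt : ∀ j j', j < j' → j' + 1 < q → z j < z j' := by
    intro j j' hjj hj'
    calc z j < ξ (j + 1) := (hzmem j (by omega)).2
      _ ≤ ξ j' := hξle (j + 1) j' (by omega) (by omega)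
      _ < z j' := (hzmem j' hj').1
  -- assign each zero to a piece
  have hassign : ∀ j, ∃ i, j + 1 < q → i ≤ p ∧ z j ∈ Set.Icc (x i) (x (i + 1)) := by
    intro j
    by_cases hj : j + 1 < q
    · have := hzin j hj
      rw [← hx0, ← hxp] at this
      obtain ⟨i, hi, hmem⟩ := exists_piece x p (z j) this
      exact ⟨i, fun _ => ⟨hi, hmem⟩⟩
    · exact ⟨0, fun h => absurd h hj⟩
  choose ι hι using hassign
  -- pigeonhole
  set Q := q - 1 with hQ
  have hmaps : ∀ j ∈ Finset.range Q, ι j ∈ Finset.range (p + 1) := by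
    intro j hj
    rw [Finset.mem_range] at hj ⊢
    have := (hι j (by omega)).1
    omega
  have hcard := Finset.card_eq_sum_card_fiberwise hmaps
  rw [Finset.card_range] at hcard
  have hex : ∃ i, i ≤ p ∧ n i + 1 ≤
      ((Finset.range Q).filter (fun j => ι j = i)).card := by
    by_contra hcon
    push_neg at hcon
    have : Q ≤ ∑ i ∈ Finset.range (p + 1), n i := by
      rw [hcard]
      refine Finset.sum_le_sum ?_
      intro i hi
      rw [Finset.mem_range] at hi
      have := hcon i (by omega)
      omega
    omega
  obtain ⟨i, hip, hcardi⟩ := hex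
  set F := (Finset.range Q).filter (fun j => ι j = i) with hF
  have hFmem : ∀ j ∈ F, j + 1 < q ∧ z j ∈ Set.Icc (x i) (x (i + 1)) := by
    intro j hj
    rw [hF, Finset.mem_filter, Finset.mem_range] at hj
    refine ⟨by omega, ?_⟩
    have := (hι j (by omega)).2
    rwa [hj.2] at this
  -- z is injective on F
  have hzinj : Set.InjOn z F := by
    intro j hj j' hj' hzz
    by_contra hne
    rcases Nat.lt_or_ge j j' with h | h
    · exact absurd hzz (ne_of_lt (hzlt j j' h (hFmem j' hj').1))
    · exact absurd hzz.symm (ne_of_lt (hzlt j' j (by omega) (hFmem j hj).1))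
  -- P i = 0
  have hPi : P i = 0 := by
    by_contra hPne
    have hroots : F.image z ⊆ (P i).roots.toFinset := by
      intro t ht
      rw [Finset.mem_image] at ht
      obtain ⟨j, hjF, rfl⟩ := ht
      rw [Multiset.mem_toFinset, Polynomial.mem_roots hPne]
      have := hval i hip (z j) (hFmem j hjF).2
      rw [Polynomial.IsRoot, ← this]
      exact hz0 j (hFmem j hjF).1
    have h1 : F.card = (F.image z).card := (Finset.card_image_of_injOn hzinj).symm
    have h2 : (F.image z).card ≤ (P i).roots.toFinset.card :=
      Finset.card_le_card hroots
    have h3 : (P i).roots.toFinset.card ≤ Multiset.card (P i).roots :=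
      Multiset.toFinset_card_le _
    have h4 : Multiset.card (P i).roots ≤ (P i).natDegree := (P i).card_roots'
    have := hdeg i hip
    omega
  -- two zeros in piece i give a ξ point inside, where δ vanishes
  have key : ∀ j j', j ∈ F → j' ∈ F → j < j' → False := by
    intro j j' hjF hj'F hlt
    have hj1 : j + 1 < q := (hFmem j hjF).1
    have hj'q : j' + 1 < q := (hFmem j' hj'F).1
    have hxi : ξ (j + 1) ∈ Set.Icc (x i) (x (i + 1)) := by
      constructor
      · exact le_trans (hFmem j hjF).2.1 (le_of_lt (hzmem j hj1).2)
      · refine le_trans (le_of_lt ?_) (hFmem j' hj'F).2.2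
        calc ξ (j + 1) ≤ ξ j' := hξle (j + 1) j' (by omega) (by omega)
          _ < z j' := (hzmem j' hj'q).1
    have := hval i hip (ξ (j + 1)) hxi
    rw [hPi] at this
    simp at this
    exact hξne (j + 1) hj1 this
  obtain ⟨j, hjF, j', hj'F, hne⟩ := Finset.one_lt_card.mp
    (show 1 < F.card by have := hn i hip; omega)
  rcases Nat.lt_or_ge j j' with hlt | hge
  · exact key j j' hjF hj'F hlt
  · exact key j' j hj'F hjF (by omega)
end
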